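/- arXiv:1502.05438 — 7 statements merged into one kernel-verified Lean document; each statement's English description precedes it below -/
import Mathlib

section
/- The number of skew-merged involutions of length n whose longest increasing subsequence has length k equals C(n-1, k-1), and consequently the total number of skew-merged involutions of length n is 2^{n-1}. -/
/-- The length of the longest increasing subsequence of a permutation:
the largest size of a set of positions on which the permutation is
strictly increasing. -/
def lisLen {n : ℕ} (σ : Equiv.Perm (Fin n)) : ℕ :=
  (Finset.univ.filter (fun s : Finset (Fin n) =>
    ∀ i ∈ s, ∀ j ∈ s, i < j → σ i < σ j)).sup Finset.card


/-- σ contains the pattern 2143. -/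
def Contains2143 {n : ℕ} (σ : Equiv.Perm (Fin n)) : Prop :=
  ∃ i1 i2 i3 i4 : Fin n, i1 < i2 ∧ i2 < i3 ∧ i3 < i4 ∧
    σ i2 < σ i1 ∧ σ i1 < σ i4 ∧ σ i4 < σ i3

/-- σ contains the pattern 3412. -/
def Contains3412 {n : ℕ} (σ : Equiv.Perm (Fin n)) : Prop :=
  ∃ i1 i2 i3 i4 : Fin n, i1 < i2 ∧ i2 < i3 ∧ i3 < i4 ∧
    σ i3 < σ i4 ∧ σ i4 < σ i1 ∧ σ i1 < σ i2

/-- A permutation is skew-merged iff it avoids 2143 and 3412. -/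
def SkewMerged {n : ℕ} (σ : Equiv.Perm (Fin n)) : Prop :=
  ¬ Contains2143 σ ∧ ¬ Contains3412 σ


/-!
An involution is skew-merged iff it is strictly decreasing on the set of points it moves. A
permutation with this property is the order reversal of its support, so these permutations of
`Fin n` correspond to the subsets of `Fin n` of even size, and there are `2 ^ (n - 1)` of them.

For the refinement by `lisLen`, write `n = m + 1` and code such a `σ` by a subset of `Fin m`:
the gaps `t` between the positions `t` and `t + 1` whose left end is moved up or whose right end
is moved down. The points moved up all lie below the points moved down, so the code determines
both halves of the support, hence `σ`; by counting, the coding is a bijection onto all subsets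
of `Fin m`. An increasing subsequence contains at most one moved point, and it can contain one
together with all fixed points exactly when the innermost arc of `σ` spans a single gap. This
is also exactly when the two halves of the code overlap, which gives
`lisLen σ + #(code σ) = n`.
-/

open Finset Equiv
open scoped symmDiff

namespace Finset

section Reversal

variable {α : Type*} [LinearOrder α]

def revPerm (s : Finset α) : Perm α :=
  Perm.ofSubtype ((s.orderIsoOfFin rfl).toEquiv.permCongr Fin.revPerm)

variable (s : Finset α)

theorem exists_orderEmbOfFin_eq {x : α} (hx : x ∈ s) : ∃ r, s.orderEmbOfFin rfl r = x := by
  obtain ⟨r, hr⟩ := (s.orderIsoOfFin rfl).surjective ⟨x, hx⟩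
  exact ⟨r, by rw [← coe_orderIsoOfFin_apply, hr]⟩

theorem revPerm_orderEmbOfFin (r : Fin #s) :
    s.revPerm (s.orderEmbOfFin rfl r) = s.orderEmbOfFin rfl r.rev := by
  rw [← coe_orderIsoOfFin_apply, revPerm, Perm.ofSubtype_apply_coe]
  simp [Equiv.permCongr_apply]

theorem revPerm_of_notMem {x : α} (hx : x ∉ s) : s.revPerm x = x :=
  Perm.ofSubtype_apply_of_not_mem _ hx

theorem revPerm_involutive : Function.Involutive s.revPerm := by
  intro x
  by_cases hx : x ∈ s
  · obtain ⟨r, rfl⟩ := s.exists_orderEmbOfFin_eq hx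
    simp [revPerm_orderEmbOfFin]
  · rw [revPerm_of_notMem s hx, revPerm_of_notMem s hx]

theorem strictAntiOn_revPerm : StrictAntiOn s.revPerm s := by
  intro x hx y hy hxy
  obtain ⟨a, rfl⟩ := s.exists_orderEmbOfFin_eq hx
  obtain ⟨b, rfl⟩ := s.exists_orderEmbOfFin_eq hy
  rw [revPerm_orderEmbOfFin, revPerm_orderEmbOfFin, OrderEmbedding.lt_iff_lt, Fin.rev_lt_rev]
  exact (OrderEmbedding.lt_iff_lt _).1 hxy

theorem support_revPerm [Fintype α] {s : Finset α} (hs : Even #s) : s.revPerm.support = s := by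
  ext x
  rw [Perm.mem_support]
  by_cases hx : x ∈ s
  · obtain ⟨r, rfl⟩ := s.exists_orderEmbOfFin_eq hx
    simp only [revPerm_orderEmbOfFin, ne_eq, EmbeddingLike.apply_eq_iff_eq, hx, iff_true]
    intro h
    have := congrArg Fin.val h
    rw [Fin.val_rev] at this
    obtain ⟨k, hk⟩ := hs
    omega
  · simp [revPerm_of_notMem s hx, hx]

end Reversal

theorem eq_of_card_eq_of_downward_closed {α : Type*} [LinearOrder α] {A B T : Finset α}
    (hA : A ⊆ T) (hB : B ⊆ T) (hAT : ∀ a ∈ A, ∀ t ∈ T, t ≤ a → t ∈ A)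
    (hBT : ∀ b ∈ B, ∀ t ∈ T, t ≤ b → t ∈ B) (hcard : #A = #B) : A = B := by
  by_cases hAB : A ⊆ B
  · exact eq_of_subset_of_card_le hAB hcard.ge
  obtain ⟨a, ha, haB⟩ := not_subset.1 hAB
  have hBA : B ⊆ A := fun b hb => by
    rcases le_total b a with h | h
    · exact hAT a ha b (hB hb) h
    · exact absurd (hBT b hb a (hA ha) h) haB
  exact (eq_of_subset_of_card_le hBA hcard.le).symm

section EvenCard

variable {α : Type*} [DecidableEq α]

theorem even_card_symmDiff_singleton_iff (s : Finset α) {a : α} :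
    Even #(s ∆ {a}) ↔ ¬Even #s := by
  by_cases ha : a ∈ s
  · have : s ∆ {a} = s.erase a := by
      ext b
      by_cases hb : b = a <;> simp [mem_symmDiff, hb, ha]
    rw [this, ← card_erase_add_one ha, Nat.even_add_one, not_not]
  · have : s ∆ {a} = insert a s := by
      ext b
      by_cases hb : b = a <;> simp [mem_symmDiff, hb, ha]
    rw [this, card_insert_of_notMem ha, Nat.even_add_one]

theorem card_subtype_even_card [Fintype α] [Nonempty α] :
    Fintype.card {s : Finset α // Even #s} = 2 ^ (Fintype.card α - 1) := by
  obtain ⟨a⟩ := ‹Nonempty α›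
  have hcompl :
      Fintype.card {s : Finset α // ¬Even #s} = Fintype.card {s : Finset α // Even #s} :=
    Fintype.card_congr <| ((symmDiff_left_involutive {a}).toPerm _).subtypeEquiv
      fun s => by simp [even_card_symmDiff_singleton_iff]
  have htotal := Fintype.card_subtype_compl (fun s : Finset α => Even #s)
  rw [Fintype.card_finset] at htotal
  have hpos := Fintype.card_pos (α := α)
  have h2 : 2 ^ Fintype.card α = 2 * 2 ^ (Fintype.card α - 1) := by
    rw [← pow_succ']
    congr 1
    omega
  omega

end EvenCard

end Finset

namespace Equiv.Perm

section LinearOrder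

variable {α : Type*} [LinearOrder α] [Fintype α] {σ : Perm α} {s : Finset α}

theorem eq_revPerm_support (hσ : StrictAntiOn σ σ.support) : σ = σ.support.revPerm := by
  set S := σ.support
  have hrev : (fun r => σ (S.orderEmbOfFin rfl r.rev)) = S.orderEmbOfFin rfl := by
    refine orderEmbOfFin_unique rfl (fun r => apply_mem_support.2 (orderEmbOfFin_mem _ _ _))
      fun a b hab => hσ (orderEmbOfFin_mem _ _ _) (orderEmbOfFin_mem _ _ _) ?_
    rwa [OrderEmbedding.lt_iff_lt, Fin.rev_lt_rev]
  ext x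
  by_cases hx : x ∈ S
  · obtain ⟨r, rfl⟩ := S.exists_orderEmbOfFin_eq hx
    simpa [revPerm_orderEmbOfFin] using congrFun hrev r.rev
  · rw [revPerm_of_notMem S hx]
    exact notMem_support.1 hx

theorem involutive_of_strictAntiOn_support (hσ : StrictAntiOn σ σ.support) :
    Function.Involutive σ := by
  rw [eq_revPerm_support hσ]
  exact revPerm_involutive _

theorem lt_of_lt_apply_of_apply_lt (hσ : StrictAntiOn σ σ.support) {x y : α}
    (hx : x < σ x) (hy : σ y < y) : x < y := by
  by_contra! hyx
  obtain rfl | hyx := hyx.eq_or_lt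
  · exact lt_asymm hx hy
  have := hσ (mem_support.2 hy.ne) (mem_support.2 hx.ne') hyx
  order

theorem card_lt_apply_eq_card_apply_lt (hσ : StrictAntiOn σ σ.support) :
    #{x | x < σ x} = #{x | σ x < x} := by
  have hinv := involutive_of_strictAntiOn_support hσ
  refine card_nbij' σ σ (fun x hx => ?_) (fun x hx => ?_) (fun x _ => hinv x) (fun x _ => hinv x)
  · simpa [hinv x] using hx
  · simpa [hinv x] using hx

theorem support_eq_filter_lt_union (σ : Perm α) :
    σ.support = ({x | x < σ x} : Finset α) ∪ ({x | σ x < x} : Finset α) := by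
  ext x
  rw [mem_support, mem_union, mem_filter_univ, mem_filter_univ, lt_or_lt_iff_ne, ne_comm]

theorem card_support_eq (σ : Perm α) : #σ.support = #{x | x < σ x} + #{x | σ x < x} := by
  rw [support_eq_filter_lt_union,
    card_union_of_disjoint (disjoint_filter.2 fun x _ h => (lt_asymm h).elim)]

theorem even_card_support (hσ : StrictAntiOn σ σ.support) : Even #σ.support := by
  rw [card_support_eq, card_lt_apply_eq_card_apply_lt hσ]
  exact ⟨_, rfl⟩

def strictAntiOnSupportEquiv :
    {σ : Perm α // StrictAntiOn σ σ.support} ≃ {s : Finset α // Even #s} where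
  toFun σ := ⟨σ.1.support, even_card_support σ.2⟩
  invFun s := ⟨s.1.revPerm, by rw [support_revPerm s.2]; exact strictAntiOn_revPerm _⟩
  left_inv σ := Subtype.ext (eq_revPerm_support σ.2).symm
  right_inv s := Subtype.ext (support_revPerm s.2)

theorem card_strictAntiOn_support [Nonempty α] :
    Nat.card {σ : Perm α // StrictAntiOn σ σ.support} = 2 ^ (Fintype.card α - 1) := by
  rw [Nat.card_congr strictAntiOnSupportEquiv, Nat.card_eq_fintype_card, card_subtype_even_card]

theorem card_filter_ne_le_one (hσ : StrictAntiOn σ σ.support) (hs : StrictMonoOn σ s) :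
    #{x ∈ s | σ x ≠ x} ≤ 1 := by
  refine card_le_one.2 fun x hx y hy => ?_
  rw [mem_filter] at hx hy
  by_contra hne
  rcases lt_or_gt_of_ne hne with h | h
  · exact lt_asymm (hs hx.1 hy.1 h) (hσ (mem_support.2 hx.2) (mem_support.2 hy.2) h)
  · exact lt_asymm (hs hy.1 hx.1 h) (hσ (mem_support.2 hy.2) (mem_support.2 hx.2) h)

theorem card_le_card_fixed_add_one (hσ : StrictAntiOn σ σ.support) (hs : StrictMonoOn σ s) :
    #s ≤ #{x | σ x = x} + 1 := by
  rw [← card_filter_add_card_filter_not (p := fun x => σ x = x)]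
  have h1 := card_filter_ne_le_one hσ hs
  have h2 : #{x ∈ s | σ x = x} ≤ #{x | σ x = x} :=
    card_le_card (filter_subset_filter _ (subset_univ _))
  simp only [ne_eq] at h1
  omega

theorem card_le_card_fixed_of_separating (hσ : StrictAntiOn σ σ.support) (hs : StrictMonoOn σ s)
    {f : α} (hf : σ f = f) (hlt : ∀ x, x < σ x → x < f) (hgt : ∀ x, σ x < x → f < x) :
    #s ≤ #{x | σ x = x} := by
  have hinv := involutive_of_strictAntiOn_support hσ
  rw [← card_filter_add_card_filter_not (p := fun x => σ x = x)]
  rcases (filter (fun x => ¬σ x = x) s).eq_empty_or_nonempty with hmoved | ⟨x, hx⟩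
  · rw [hmoved, card_empty, add_zero]
    exact card_le_card (filter_subset_filter _ (subset_univ _))
  rw [mem_filter] at hx
  have hfs : f ∉ s := by
    intro hfs
    rcases lt_or_gt_of_ne hx.2 with h | h
    · have := hs hfs hx.1 (hgt x h)
      have := hlt (σ x) (by rwa [hinv])
      order
    · have := hs hx.1 hfs (hlt x h)
      have := hgt (σ x) (by rwa [hinv])
      order
  have hsub : {x ∈ s | σ x = x} ⊆ ({x | σ x = x} : Finset α).erase f := fun y hy => by
    rw [mem_filter] at hy
    exact mem_erase.2 ⟨fun h => hfs (h ▸ hy.1), by simp [hy.2]⟩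
  have h1 := card_le_card hsub
  have h2 := card_filter_ne_le_one hσ hs
  have hfF : f ∈ ({x | σ x = x} : Finset α) := by simp [hf]
  have h3 := card_pos.2 ⟨f, hfF⟩
  rw [card_erase_of_mem hfF] at h1
  simp only [ne_eq] at h2
  omega

end LinearOrder

end Equiv.Perm

section Patterns

open Equiv.Perm

variable {n : ℕ} {σ : Perm (Fin n)}

theorem skewMerged_of_strictAntiOn_support (hσ : StrictAntiOn σ σ.support) : SkewMerged σ := by
  have moved : ∀ {x y}, x < y → σ y < σ x → x ∈ σ.support ∨ y ∈ σ.support := by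
    intro x y hxy h
    by_contra! hc
    rw [notMem_support, notMem_support] at hc
    rw [hc.1, hc.2] at h
    exact lt_asymm hxy h
  have fixed : ∀ {x y}, x < y → σ x < σ y → σ x = x ∨ σ y = y := by
    intro x y hxy h
    by_contra! hc
    exact lt_asymm h (hσ (mem_support.2 hc.1) (mem_support.2 hc.2) hxy)
  constructor
  · rintro ⟨i1, i2, i3, i4, h12, h23, h34, h1, h2, h3⟩
    rcases moved h12 h1 with ha | ha <;> rcases moved h34 h3 with hb | hb <;>
    · have := hσ ha hb (by order)
      order
  · rintro ⟨i1, i2, i3, i4, h12, h23, h34, h1, h2, h3⟩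
    rcases fixed h12 h3 with ha | ha <;> rcases fixed h34 h1 with hb | hb <;> order

theorem apply_lt_apply_of_skewMerged (hinv : Function.Involutive σ) (hs : SkewMerged σ)
    {x y : Fin n} (hx : x < σ x) (hy : y < σ y) (hxy : x < y) : σ y < σ x := by
  by_contra! h
  have hlt : σ x < σ y := h.lt_of_ne (σ.injective.ne hxy.ne)
  have hne : σ x ≠ y := by
    rintro rfl
    rw [hinv] at hy
    exact lt_asymm hx hy
  rcases hne.lt_or_gt with h1 | h1
  · exact hs.1 ⟨x, σ x, y, σ y, hx, h1, hy, by rwa [hinv], by rwa [hinv], by rwa [hinv]⟩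
  · exact hs.2 ⟨x, y, σ x, σ y, hxy, h1, hlt, by rwa [hinv, hinv], by rwa [hinv], hlt⟩

theorem strictAntiOn_support_of_skewMerged (hinv : Function.Involutive σ) (hs : SkewMerged σ) :
    StrictAntiOn σ σ.support := by
  have nested : ∀ {x y}, x < σ x → y < σ y → x < y → σ y < σ x :=
    apply_lt_apply_of_skewMerged hinv hs
  intro x hx y hy hxy
  rw [mem_coe, mem_support] at hx hy
  rcases hx.lt_or_gt with hx | hx <;> rcases hy.lt_or_gt with hy | hy
  · by_contra! h
    have := nested (x := σ x) (y := σ y) (by rwa [hinv]) (by rwa [hinv])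
      (h.lt_of_ne (σ.injective.ne hxy.ne))
    rw [hinv, hinv] at this
    order
  · have := nested (x := σ x) (y := y) (by rwa [hinv]) hy (by order)
    rw [hinv] at this
    order
  · rcases lt_trichotomy x (σ y) with h | rfl | h
    · have := nested hx (by rwa [hinv]) h
      rw [hinv] at this
      order
    · rwa [hinv]
    · order
  · exact nested hx hy hxy

theorem skewMerged_and_inv_eq_self_iff :
    SkewMerged σ ∧ σ⁻¹ = σ ↔ StrictAntiOn σ σ.support := by
  constructor
  · rintro ⟨hs, hinv⟩
    have hinv' : Function.Involutive σ := fun x => by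
      nth_rewrite 1 [← hinv]
      exact σ.symm_apply_apply x
    exact strictAntiOn_support_of_skewMerged hinv' hs
  · intro hσ
    exact ⟨skewMerged_of_strictAntiOn_support hσ,
      Function.Involutive.symm_eq_self_of_involutive σ (involutive_of_strictAntiOn_support hσ)⟩

end Patterns

section LongestIncreasingSubsequence

variable {n : ℕ} {σ : Perm (Fin n)}

theorem le_lisLen {s : Finset (Fin n)} (hs : StrictMonoOn σ s) : #s ≤ lisLen σ :=
  le_sup (f := card) (mem_filter.2 ⟨mem_univ _, fun _ hi _ hj => hs hi hj⟩)

theorem lisLen_le {K : ℕ} (h : ∀ s : Finset (Fin n), StrictMonoOn σ s → #s ≤ K) :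
    lisLen σ ≤ K :=
  Finset.sup_le fun s hs => h s fun _ hi _ hj => (mem_filter.1 hs).2 _ hi _ hj

theorem card_fixed_le_lisLen : #{x | σ x = x} ≤ lisLen σ :=
  le_lisLen fun x hx y hy hxy => by simp_all

end LongestIncreasingSubsequence

namespace Equiv.Perm

variable {m : ℕ} {σ τ : Perm (Fin (m + 1))}

/-- `t : Fin m` stands for the gap between the positions `t.castSucc` and `t.succ`. -/
def openGaps (σ : Perm (Fin (m + 1))) : Finset (Fin m) := {t | t.castSucc < σ t.castSucc}

def closeGaps (σ : Perm (Fin (m + 1))) : Finset (Fin m) := {t | σ t.succ < t.succ}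

def gapCode (σ : Perm (Fin (m + 1))) : Finset (Fin m) := openGaps σ ∪ closeGaps σ

@[simp]
theorem mem_openGaps {t : Fin m} : t ∈ openGaps σ ↔ t.castSucc < σ t.castSucc :=
  mem_filter_univ t

@[simp]
theorem mem_closeGaps {t : Fin m} : t ∈ closeGaps σ ↔ σ t.succ < t.succ :=
  mem_filter_univ t

theorem map_openGaps : (openGaps σ).map Fin.castSuccEmb = ({x | x < σ x} : Finset _) := by
  ext x
  simp only [mem_map, mem_openGaps, mem_filter_univ, Fin.coe_castSuccEmb]
  constructor
  · rintro ⟨t, ht, rfl⟩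
    exact ht
  · intro hx
    obtain ⟨t, rfl⟩ := Fin.exists_castSucc_eq.2 (Fin.ne_last_of_lt hx)
    exact ⟨t, hx, rfl⟩

theorem map_closeGaps : (closeGaps σ).map (Fin.succEmb m) = ({x | σ x < x} : Finset _) := by
  ext x
  simp only [mem_map, mem_closeGaps, mem_filter_univ, Fin.coe_succEmb]
  constructor
  · rintro ⟨t, ht, rfl⟩
    exact ht
  · intro hx
    obtain ⟨t, rfl⟩ := Fin.exists_succ_eq.2 (Fin.ne_zero_of_lt hx)
    exact ⟨t, hx, rfl⟩

theorem card_openGaps_eq_card_lt : #(openGaps σ) = #{x | x < σ x} := by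
  rw [← map_openGaps, card_map]

theorem card_closeGaps_eq_card_gt : #(closeGaps σ) = #{x | σ x < x} := by
  rw [← map_closeGaps, card_map]

theorem support_eq_map_openGaps_union :
    σ.support = (openGaps σ).map Fin.castSuccEmb ∪ (closeGaps σ).map (Fin.succEmb m) := by
  rw [map_openGaps, map_closeGaps, support_eq_filter_lt_union]

theorem le_of_mem_openGaps_of_mem_closeGaps (hσ : StrictAntiOn σ σ.support) {t u : Fin m}
    (ht : t ∈ openGaps σ) (hu : u ∈ closeGaps σ) : t ≤ u := by
  rw [← Fin.castSucc_lt_succ_iff]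
  exact lt_of_lt_apply_of_apply_lt hσ (mem_openGaps.1 ht) (mem_closeGaps.1 hu)

theorem mem_openGaps_of_le (hσ : StrictAntiOn σ σ.support) {a t : Fin m}
    (ha : a ∈ openGaps σ) (ht : t ∈ gapCode σ) (hta : t ≤ a) : t ∈ openGaps σ := by
  rcases mem_union.1 ht with ht | ht
  · exact ht
  · rwa [le_antisymm hta (le_of_mem_openGaps_of_mem_closeGaps hσ ha ht)]

theorem mem_closeGaps_of_le (hσ : StrictAntiOn σ σ.support) {a t : Fin m}
    (ha : a ∈ closeGaps σ) (ht : t ∈ gapCode σ) (hat : a ≤ t) : t ∈ closeGaps σ := by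
  rcases mem_union.1 ht with ht | ht
  · rwa [← le_antisymm hat (le_of_mem_openGaps_of_mem_closeGaps hσ ht ha)]
  · exact ht

theorem card_openGaps_inter_closeGaps_le_one (hσ : StrictAntiOn σ σ.support) :
    #(openGaps σ ∩ closeGaps σ) ≤ 1 := by
  refine card_le_one.2 fun t ht u hu => ?_
  rw [mem_inter] at ht hu
  exact le_antisymm (le_of_mem_openGaps_of_mem_closeGaps hσ ht.1 hu.2)
    (le_of_mem_openGaps_of_mem_closeGaps hσ hu.1 ht.2)

theorem card_openGaps_eq_card_closeGaps (hσ : StrictAntiOn σ σ.support) :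
    #(openGaps σ) = #(closeGaps σ) := by
  rw [card_openGaps_eq_card_lt, card_closeGaps_eq_card_gt, card_lt_apply_eq_card_apply_lt hσ]

theorem card_openGaps_eq_half (hσ : StrictAntiOn σ σ.support) :
    #(openGaps σ) = (#(gapCode σ) + 1) / 2 := by
  have := card_union_add_card_inter (openGaps σ) (closeGaps σ)
  have := card_openGaps_eq_card_closeGaps hσ
  have := card_openGaps_inter_closeGaps_le_one hσ
  rw [gapCode]
  omega

theorem card_closeGaps_eq_half (hσ : StrictAntiOn σ σ.support) :
    #(closeGaps σ) = (#(gapCode σ) + 1) / 2 := by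
  rw [← card_openGaps_eq_card_closeGaps hσ, card_openGaps_eq_half hσ]

theorem eq_of_gapCode_eq (hσ : StrictAntiOn σ σ.support) (hτ : StrictAntiOn τ τ.support)
    (h : gapCode σ = gapCode τ) : σ = τ := by
  have hopen : openGaps σ = openGaps τ :=
    eq_of_card_eq_of_downward_closed (T := gapCode σ) subset_union_left (h ▸ subset_union_left)
      (fun a ha t ht => mem_openGaps_of_le hσ ha ht)
      (fun a ha t ht => mem_openGaps_of_le hτ ha (h ▸ ht))
      (by rw [card_openGaps_eq_half hσ, card_openGaps_eq_half hτ, h])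
  have hcard : #(closeGaps σ) = #(closeGaps τ) := by
    rw [card_closeGaps_eq_half hσ, card_closeGaps_eq_half hτ, h]
  have hclose : closeGaps σ = closeGaps τ :=
    eq_of_card_eq_of_downward_closed (α := (Fin m)ᵒᵈ) (T := gapCode σ) subset_union_right
      (h ▸ subset_union_right) (fun a ha t ht => mem_closeGaps_of_le hσ ha ht)
      (fun a ha t ht => mem_closeGaps_of_le hτ ha (h ▸ ht)) hcard
  rw [eq_revPerm_support hσ, eq_revPerm_support hτ, support_eq_map_openGaps_union,
    support_eq_map_openGaps_union (σ := τ), hopen, hclose]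

theorem gapCode_bijective :
    Function.Bijective fun σ : {σ : Perm (Fin (m + 1)) // StrictAntiOn σ σ.support} =>
      gapCode σ.1 := by
  refine Function.Injective.bijective_of_nat_card_le
    (fun σ τ h => Subtype.ext (eq_of_gapCode_eq σ.2 τ.2 h)) ?_
  rw [card_strictAntiOn_support, Nat.card_eq_fintype_card, Fintype.card_finset,
    Fintype.card_fin, Fintype.card_fin, Nat.add_sub_cancel]

theorem exists_separating_fixed (hσ : StrictAntiOn σ σ.support)
    (hadj : openGaps σ ∩ closeGaps σ = ∅) {x : Fin (m + 1)} (hx : σ x ≠ x) :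
    ∃ f, σ f = f ∧ (∀ y, y < σ y → y < f) ∧ ∀ y, σ y < y → f < y := by
  have hinv := involutive_of_strictAntiOn_support hσ
  have hopen : ({y | y < σ y} : Finset _).Nonempty := by
    rcases lt_or_gt_of_ne hx with h | h
    · exact ⟨σ x, by simpa [hinv x] using h⟩
    · exact ⟨x, by simpa using h⟩
  set a := max' _ hopen
  have ha : a < σ a := (mem_filter_univ a).1 (max'_mem _ hopen)
  have hle : ∀ y, y < σ y → y ≤ a := fun y hy => le_max' _ _ (by simpa using hy)
  obtain ⟨t, hta⟩ := Fin.exists_castSucc_eq.2 (Fin.ne_last_of_lt ha)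
  have hgt : ∀ y, σ y < y → t.succ ≤ y := fun y hy =>
    Fin.castSucc_lt_iff_succ_le.1 (hta ▸ lt_of_lt_apply_of_apply_lt hσ ha hy)
  have hfix : σ t.succ = t.succ := by
    rcases lt_trichotomy (σ t.succ) t.succ with h | h | h
    · have : t ∈ openGaps σ ∩ closeGaps σ :=
        mem_inter.2 ⟨mem_openGaps.2 (hta ▸ ha), mem_closeGaps.2 h⟩
      simp [hadj] at this
    · exact h
    · have := hle _ h
      rw [← hta] at this
      exact absurd this (not_le.2 t.castSucc_lt_succ)
  refine ⟨t.succ, hfix, fun y hy => (hle y hy).trans_lt (hta ▸ t.castSucc_lt_succ),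
    fun y hy => (hgt y hy).lt_of_ne ?_⟩
  rintro rfl
  exact hy.ne hfix

theorem strictMonoOn_insert_fixed (hσ : StrictAntiOn σ σ.support) {t : Fin m}
    (ht : t ∈ openGaps σ ∩ closeGaps σ) :
    StrictMonoOn σ ↑(insert t.castSucc ({x | σ x = x} : Finset (Fin (m + 1)))) := by
  have hinv := involutive_of_strictAntiOn_support hσ
  rw [mem_inter, mem_openGaps, mem_closeGaps] at ht
  have hpair : σ t.castSucc = t.succ := by
    by_contra hne
    have h1 := Fin.castSucc_lt_iff_succ_le.1 ht.1
    have h2 := Fin.le_castSucc_iff.2 ht.2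
    have := hσ (mem_support.2 ht.2.ne) (apply_mem_support.2 (mem_support.2 ht.1.ne'))
      (h1.lt_of_ne' hne)
    rw [hinv] at this
    order
  intro x hx y hy hxy
  simp only [coe_insert, Set.mem_insert_iff, mem_coe, mem_filter_univ] at hx hy
  rcases hx with rfl | hx <;> rcases hy with rfl | hy
  · exact absurd hxy (lt_irrefl _)
  · have := Fin.castSucc_lt_iff_succ_le.1 hxy
    rw [hpair, hy]
    exact this.lt_of_ne fun h => ht.2.ne (h ▸ hy)
  · rw [hpair, hx]
    exact hxy.trans t.castSucc_lt_succ
  · rwa [hx, hy]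

theorem lisLen_eq (hσ : StrictAntiOn σ σ.support) :
    lisLen σ = #{x | σ x = x} + #(openGaps σ ∩ closeGaps σ) := by
  rcases (openGaps σ ∩ closeGaps σ).eq_empty_or_nonempty with hadj | ⟨t, ht⟩
  · rw [hadj, card_empty, add_zero]
    refine le_antisymm (lisLen_le fun s hs => ?_) card_fixed_le_lisLen
    by_cases hmoved : ∃ x, σ x ≠ x
    · obtain ⟨x, hx⟩ := hmoved
      obtain ⟨f, hf, hlt, hgt⟩ := exists_separating_fixed hσ hadj hx
      exact card_le_card_fixed_of_separating hσ hs hf hlt hgt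
    · simp only [not_exists, not_not] at hmoved
      exact card_le_card fun x _ => by simp [hmoved x]
  · have hone : #(openGaps σ ∩ closeGaps σ) = 1 :=
      le_antisymm (card_openGaps_inter_closeGaps_le_one hσ) (card_pos.2 ⟨t, ht⟩)
    rw [hone]
    refine le_antisymm (lisLen_le fun s hs => card_le_card_fixed_add_one hσ hs) ?_
    have := le_lisLen (strictMonoOn_insert_fixed hσ ht)
    rwa [card_insert_of_notMem (by simpa using (mem_openGaps.1 (mem_inter.1 ht).1).ne')] at this

theorem lisLen_add_card_gapCode (hσ : StrictAntiOn σ σ.support) :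
    lisLen σ + #(gapCode σ) = m + 1 := by
  have hunion := card_union_add_card_inter (openGaps σ) (closeGaps σ)
  rw [card_openGaps_eq_card_lt, card_closeGaps_eq_card_gt, ← card_support_eq] at hunion
  have hfixed := card_filter_add_card_filter_not (s := univ) (p := fun x => σ x = x)
  have hsupp : ({x | ¬σ x = x} : Finset _) = σ.support := by ext; simp
  rw [hsupp, card_univ, Fintype.card_fin] at hfixed
  rw [lisLen_eq hσ, gapCode]
  omega

end Equiv.Perm

theorem skewMerged_involutions_count_general (n k : ℕ)
    (hk1 : 1 ≤ k) (hk2 : k ≤ n) :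
    Nat.card {σ : Equiv.Perm (Fin n) // SkewMerged σ ∧ σ⁻¹ = σ ∧ lisLen σ = k} =
        (n - 1).choose (k - 1) ∧
      Nat.card {σ : Equiv.Perm (Fin n) // SkewMerged σ ∧ σ⁻¹ = σ} = 2 ^ (n - 1) := by
  obtain ⟨m, rfl⟩ : ∃ m, n = m + 1 := ⟨n - 1, by omega⟩
  have hclass (σ : Perm (Fin (m + 1))) :
      SkewMerged σ ∧ σ⁻¹ = σ ↔ StrictAntiOn σ σ.support :=
    skewMerged_and_inv_eq_self_iff
  refine ⟨?_, by
    rw [Nat.card_congr (Equiv.subtypeEquivRight hclass), Perm.card_strictAntiOn_support,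
      Fintype.card_fin]⟩
  calc Nat.card {σ : Perm (Fin (m + 1)) // SkewMerged σ ∧ σ⁻¹ = σ ∧ lisLen σ = k}
      = Nat.card {σ : {σ : Perm (Fin (m + 1)) // StrictAntiOn σ σ.support} //
          lisLen σ.1 = k} :=
        Nat.card_congr <| (Equiv.subtypeEquivRight fun σ => by rw [← and_assoc, hclass]).trans
          (Equiv.subtypeSubtypeEquivSubtypeInter _ _).symm
    _ = Nat.card {T : Finset (Fin m) // #T = m + 1 - k} :=
        Nat.card_congr <| (Equiv.ofBijective _ Perm.gapCode_bijective).subtypeEquiv fun σ => by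
          have := Perm.lisLen_add_card_gapCode σ.2
          simp only [Equiv.ofBijective_apply]
          omega
    _ = (m + 1 - 1).choose (k - 1) := by
        rw [Nat.card_eq_fintype_card, Fintype.card_finset_len, Fintype.card_fin,
          Nat.add_sub_cancel, ← Nat.choose_symm (by omega)]
        congr 1
        omega

theorem skewMerged_involutions_count (n k : ℕ) (hn : 1 ≤ n)
    (hk1 : 1 ≤ k) (hk2 : k ≤ n) :
    Nat.card {σ : Equiv.Perm (Fin n) // SkewMerged σ ∧ σ⁻¹ = σ ∧ lisLen σ = k} =
        (n - 1).choose (k - 1) ∧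
      Nat.card {σ : Equiv.Perm (Fin n) // SkewMerged σ ∧ σ⁻¹ = σ} = 2 ^ (n - 1) :=
  skewMerged_involutions_count_general n k hk1 hk2
end

section
/- Every skew-merged involution corresponds under the Robinson–Schensted correspondence to a hook-shaped standard Young tableau. Equivalently, for every skew-merged involution σ of length n, the lengths of the longest increasing subsequence and the longest decreasing subsequence of σ sum to n + 1. -/
/-- The length of the longest decreasing subsequence of a permutation. -/
def ldsLen {n : ℕ} (σ : Equiv.Perm (Fin n)) : ℕ :=
  (Finset.univ.filter (fun s : Finset (Fin n) =>
    ∀ i ∈ s, ∀ j ∈ s, i < j → σ j < σ i)).sup Finset.card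


/-!
An increasing and a decreasing subsequence share at most one position, so
`lisLen σ + ldsLen σ ≤ n + 1` for every permutation. For the reverse inequality, take a
σ-invariant set of positions with least element `a` and greatest element `b`. Pattern avoidance
forces `σ a = a`, `σ b = b`, or `σ` to swap `a` and `b`. A fixed extreme point can be added to
an increasing subsequence of the rest, and a swapped pair can be added to a decreasing one.
Peeling off extreme points until one position is left, which lies in both subsequences, yields
an increasing and a decreasing subsequence whose lengths sum to `n + 1`.
-/

open Finset Function

theorem StrictMonoOn.inter_subsingleton_of_strictAntiOn {α β : Type*} [LinearOrder α]
    [Preorder β] {f : α → β} {s t : Set α} (hs : StrictMonoOn f s) (ht : StrictAntiOn f t) :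
    (s ∩ t).Subsingleton := by
  intro x hx y hy
  by_contra hxy
  obtain h | h := lt_or_gt_of_ne hxy
  · exact (hs hx.1 hy.1 h).asymm (ht hx.2 hy.2 h)
  · exact (hs hy.1 hx.1 h).asymm (ht hy.2 hx.2 h)

theorem Function.Involutive.mapsTo_diff {α : Type*} {f : α → α} (hf : Involutive f)
    {s u : Set α} (hs : Set.MapsTo f s s) (hu : Set.MapsTo f u u) :
    Set.MapsTo f (s \ u) (s \ u) :=
  fun x hx => ⟨hs hx.1, fun h => hx.2 (hf x ▸ hu h)⟩

section LongestSubsequences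

variable {n : ℕ} {σ : Equiv.Perm (Fin n)} {S : Finset (Fin n)}

theorem card_le_lisLen (hS : StrictMonoOn σ S) : #S ≤ lisLen σ :=
  le_sup (f := card) (mem_filter.2 ⟨mem_univ _, fun _ hi _ hj => hS hi hj⟩)

theorem card_le_ldsLen (hS : StrictAntiOn σ S) : #S ≤ ldsLen σ :=
  le_sup (f := card) (mem_filter.2 ⟨mem_univ _, fun _ hi _ hj => hS hi hj⟩)

theorem exists_strictMonoOn_card_eq_lisLen (σ : Equiv.Perm (Fin n)) :
    ∃ S : Finset (Fin n), StrictMonoOn σ S ∧ #S = lisLen σ := by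
  obtain ⟨S, hS, hcard⟩ : ∃ S ∈ _, lisLen σ = #S :=
    exists_mem_eq_sup _ ⟨∅, mem_filter.2 ⟨mem_univ _, by simp⟩⟩ card
  exact ⟨S, fun _ hi _ hj => (mem_filter.1 hS).2 _ hi _ hj, hcard.symm⟩

theorem exists_strictAntiOn_card_eq_ldsLen (σ : Equiv.Perm (Fin n)) :
    ∃ S : Finset (Fin n), StrictAntiOn σ S ∧ #S = ldsLen σ := by
  obtain ⟨S, hS, hcard⟩ : ∃ S ∈ _, ldsLen σ = #S :=
    exists_mem_eq_sup _ ⟨∅, mem_filter.2 ⟨mem_univ _, by simp⟩⟩ card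
  exact ⟨S, fun _ hi _ hj => (mem_filter.1 hS).2 _ hi _ hj, hcard.symm⟩

theorem lisLen_add_ldsLen_le (σ : Equiv.Perm (Fin n)) : lisLen σ + ldsLen σ ≤ n + 1 := by
  obtain ⟨S, hS, hS_card⟩ := exists_strictMonoOn_card_eq_lisLen σ
  obtain ⟨T, hT, hT_card⟩ := exists_strictAntiOn_card_eq_ldsLen σ
  rw [← hS_card, ← hT_card]
  have hinter : #(S ∩ T) ≤ 1 :=
    card_le_one.2 fun x hx y hy =>
      hS.inter_subsingleton_of_strictAntiOn hT (by simpa using hx) (by simpa using hy)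
  calc #S + #T = #(S ∪ T) + #(S ∩ T) := (card_union_add_card_inter S T).symm
    _ ≤ n + 1 := add_le_add ((card_le_univ _).trans_eq (Fintype.card_fin n)) hinter

end LongestSubsequences

def HasHookPair {α β : Type*} [LinearOrder α] [Preorder β] (f : α → β) (s : Finset α) :
    Prop :=
  ∃ S ⊆ s, ∃ T ⊆ s, StrictMonoOn f S ∧ StrictAntiOn f T ∧ #s + 1 ≤ #S + #T

namespace HasHookPair

variable {α : Type*} [LinearOrder α] {f : α → α} {s : Finset α} {a b : α}

theorem singleton {β : Type*} [Preorder β] (f : α → β) (a : α) : HasHookPair f {a} :=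
  ⟨{a}, subset_rfl, {a}, subset_rfl, by simp, by simp, by simp⟩

theorem pair (hab : a < b) (ha : f a = b) (hb : f b = a) : HasHookPair f {a, b} := by
  refine ⟨{a}, by simp, {a, b}, subset_rfl, by simp, ?_, ?_⟩
  · simp [strictAntiOn_insert_iff, ha, hb, hab]
  · simp [card_pair hab.ne]

theorem insert_of_forall_lt (h : HasHookPair f s) (hs : Set.MapsTo f s s) (ha : f a = a)
    (has : ∀ x ∈ s, a < x) : HasHookPair f (insert a s) := by
  obtain ⟨S, hSs, T, hTs, hS, hT, hcard⟩ := h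
  refine ⟨insert a S, insert_subset_insert a hSs, T, hTs.trans (subset_insert a s), ?_, hT, ?_⟩
  · rw [coe_insert, strictMonoOn_insert_iff_of_forall_ge fun x hx => (has x (hSs hx)).le, ha]
    exact ⟨fun x hx _ => has _ (hs (hSs hx)), hS⟩
  · rw [card_insert_of_notMem fun h => (has a h).false,
      card_insert_of_notMem fun h => (has a (hSs h)).false]
    omega

theorem insert_of_forall_gt (h : HasHookPair f s) (hs : Set.MapsTo f s s) (ha : f a = a)
    (has : ∀ x ∈ s, x < a) : HasHookPair f (insert a s) := by
  obtain ⟨S, hSs, T, hTs, hS, hT, hcard⟩ := h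
  refine ⟨insert a S, insert_subset_insert a hSs, T, hTs.trans (subset_insert a s), ?_, hT, ?_⟩
  · rw [coe_insert, strictMonoOn_insert_iff_of_forall_le fun x hx => (has x (hSs hx)).le, ha]
    exact ⟨fun x hx _ => has _ (hs (hSs hx)), hS⟩
  · rw [card_insert_of_notMem fun h => (has a h).false,
      card_insert_of_notMem fun h => (has a (hSs h)).false]
    omega

theorem insert_insert (h : HasHookPair f s) (hs : Set.MapsTo f s s) (hab : a < b)
    (ha : f a = b) (hb : f b = a) (has : ∀ x ∈ s, a < x) (hbs : ∀ x ∈ s, x < b) :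
    HasHookPair f (insert a (insert b s)) := by
  obtain ⟨S, hSs, T, hTs, hS, hT, hcard⟩ := h
  refine ⟨S, hSs.trans ((subset_insert b s).trans (subset_insert a _)),
    insert a (insert b T), insert_subset_insert a (insert_subset_insert b hTs), hS, ?_, ?_⟩
  · have hbT : StrictAntiOn f (insert b (T : Set α)) := by
      rw [strictAntiOn_insert_iff_of_forall_le fun x hx => (hbs x (hTs hx)).le, hb]
      exact ⟨fun x hx _ => has _ (hs (hTs hx)), hT⟩
    rw [coe_insert, coe_insert, strictAntiOn_insert_iff_of_forall_ge ?_, ha]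
    · refine ⟨?_, hbT⟩
      rintro x (rfl | hx) -
      · rwa [hb]
      · exact hbs _ (hs (hTs hx))
    · rintro x (rfl | hx)
      exacts [hab.le, (has x (hTs hx)).le]
  · have has' : a ∉ s := fun h => (has a h).false
    have hbs' : b ∉ s := fun h => (hbs b h).false
    rw [card_insert_of_notMem fun h => (mem_insert.1 h).elim hab.ne has',
      card_insert_of_notMem hbs',
      card_insert_of_notMem fun h => (mem_insert.1 h).elim hab.ne (has' <| hTs ·),
      card_insert_of_notMem fun h => hbs' (hTs h)]
    omega

end HasHookPair

namespace SkewMerged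

variable {n : ℕ} {σ : Equiv.Perm (Fin n)}

/-- Otherwise `σ a` and `σ b` lie strictly between `a` and `b`, and `a, σ a, σ b, b` or
`a, σ b, σ a, b` is an occurrence of `2143` or of `3412`. -/
theorem fixed_or_swapped_of_mem_Icc (hσ : SkewMerged σ) (hinv : Involutive σ) {a b : Fin n}
    (ha : σ a ∈ Set.Icc a b) (hb : σ b ∈ Set.Icc a b) :
    σ a = a ∨ σ b = b ∨ σ a = b := by
  by_contra! h
  obtain ⟨hfa, hfb, hfab⟩ := h
  have hfba : σ b ≠ a := fun h => hfab (by rw [← h, hinv])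
  have ha' : a < σ a ∧ σ a < b := ⟨ha.1.lt_of_ne' hfa, ha.2.lt_of_ne hfab⟩
  have hb' : a < σ b ∧ σ b < b := ⟨hb.1.lt_of_ne' hfba, hb.2.lt_of_ne hfb⟩
  have hne : σ a ≠ σ b := σ.injective.ne (ha'.1.trans ha'.2).ne
  obtain h | h := hne.lt_or_gt
  · exact hσ.1 ⟨a, σ a, σ b, b, ha'.1, h, hb'.2, by rw [hinv]; exact ha'.1, h,
      by rw [hinv]; exact hb'.2⟩
  · exact hσ.2 ⟨a, σ b, σ a, b, hb'.1, h, ha'.2, by rw [hinv]; exact hb'.1, h,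
      by rw [hinv]; exact ha'.2⟩

theorem hasHookPair_of_mapsTo (hσ : SkewMerged σ) (hinv : Involutive σ) {s : Finset (Fin n)}
    (hs : Set.MapsTo σ s s) (hne : s.Nonempty) : HasHookPair σ s := by
  induction hne using Finset.Nonempty.strong_induction with
  | h₀ a => exact .singleton σ a
  | @h₁ s hnt ih =>
    set a := s.min' hnt.nonempty
    set b := s.max' hnt.nonempty
    have ha : a ∈ s := min'_mem _ _
    have hb : b ∈ s := max'_mem _ _
    have hab : a < b := min'_lt_max'_of_card _ (one_lt_card_iff_nontrivial.2 hnt)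
    have hIcc : ∀ x ∈ s, x ∈ Set.Icc a b := fun x hx => ⟨min'_le _ _ hx, le_max' _ _ hx⟩
    have hmin : ∀ x ∈ s.erase a, a < x := fun x hx =>
      (hIcc x (mem_of_mem_erase hx)).1.lt_of_ne' (ne_of_mem_erase hx)
    have hmax : ∀ x ∈ s.erase b, x < b := fun x hx =>
      (hIcc x (mem_of_mem_erase hx)).2.lt_of_ne (ne_of_mem_erase hx)
    rcases hσ.fixed_or_swapped_of_mem_Icc hinv (hIcc _ (hs ha)) (hIcc _ (hs hb))
      with hfa | hfb | hfab
    · have ht : Set.MapsTo σ (s.erase a) (s.erase a) := by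
        rw [coe_erase]
        exact hinv.mapsTo_diff hs (Set.mapsTo_singleton.2 hfa)
      rw [← insert_erase ha]
      exact (ih _ hnt.erase_nonempty (erase_ssubset ha) ht).insert_of_forall_lt ht hfa hmin
    · have ht : Set.MapsTo σ (s.erase b) (s.erase b) := by
        rw [coe_erase]
        exact hinv.mapsTo_diff hs (Set.mapsTo_singleton.2 hfb)
      rw [← insert_erase hb]
      exact (ih _ hnt.erase_nonempty (erase_ssubset hb) ht).insert_of_forall_gt ht hfb hmax
    · have hfba : σ b = a := by rw [← hfab, hinv]
      have hb' : b ∈ s.erase a := mem_erase.2 ⟨hab.ne', hb⟩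
      set t := (s.erase a).erase b
      have hts : insert a (insert b t) = s := by rw [insert_erase hb', insert_erase ha]
      rcases t.eq_empty_or_nonempty with ht | ht
      · rw [← hts, ht, insert_empty]
        exact .pair hab hfab hfba
      have htt : Set.MapsTo σ t t := by
        rw [coe_erase, coe_erase, Set.sdiff_sdiff, Set.singleton_union]
        refine hinv.mapsTo_diff hs ?_
        rintro x (rfl | rfl) <;> simp [hfab, hfba]
      rw [← hts]
      exact (ih t ht ((erase_ssubset hb').trans (erase_ssubset ha)) htt).insert_insert htt hab
        hfab hfba (fun x hx => hmin x (mem_of_mem_erase hx))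
        fun x hx => hmax x <|
          mem_erase.2 ⟨ne_of_mem_erase hx, mem_of_mem_erase (mem_of_mem_erase hx)⟩

end SkewMerged

theorem skewMerged_involution_hook (n : ℕ) (hn : 1 ≤ n) (σ : Equiv.Perm (Fin n))
    (hsm : SkewMerged σ) (hinv : σ⁻¹ = σ) :
    lisLen σ + ldsLen σ = n + 1 := by
  have hσ : Involutive σ := fun x => by
    simpa only [hinv] using Equiv.Perm.inv_eq_iff_eq.2 (rfl : σ x = σ x)
  obtain ⟨S, -, T, -, hS, hT, hcard⟩ := hsm.hasHookPair_of_mapsTo hσ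
    (fun x _ => mem_coe.2 (mem_univ _)) (univ_nonempty_iff.2 ⟨⟨0, hn⟩⟩)
  rw [card_univ, Fintype.card_fin] at hcard
  have := card_le_lisLen hS
  have := card_le_ldsLen hT
  exact (lisLen_add_ldsLen_le σ).antisymm (by omega)
end

section
/- Let σ be a skew-merged permutation (avoiding 2143 and 3412) that is an involution. If there exist indices i < j < j+1 < k such that σ(i), σ(j), σ(j+1), σ(k) form a 3142-pattern, then σ contains a 3412-pattern or a 2143-pattern — a contradiction; hence no skew-merged involution contains a 3142-pattern occupying positions i < j < j+1 < k with the middle two positions adjacent. -/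
/-!
In a skew-merged involution `σ`, the excedances `p < σ p` carry decreasing values: for
excedances `p < q` with `σ p < σ q`, the points `p, q, σ p, σ q` form a `2143` (if `σ p < q`)
or a `3412` (if `q < σ p`), while `σ p = q` would force `σ q = p`.

Given a `3142` occurrence `(c, a, d, b)` at positions `i < j < j + 1 < k`, the positions `i < j + 1`
cannot both be excedances, as `c < d`. If one is not, then `a < c ≤ i` or `a + 2 ≤ d ≤ j + 1`
(this is where adjacency enters), and likewise `b < k`; so `a < b` are excedances with
`σ a = j < k = σ b`.
-/

theorem SkewMerged.strictAntiOn_excedances {n : ℕ} {σ : Equiv.Perm (Fin n)}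
    (hsm : SkewMerged σ) (hσ : Function.Involutive σ) :
    StrictAntiOn σ {x | x < σ x} := by
  intro p hp q hq hpq
  refine lt_of_le_of_ne (not_lt.1 fun hlt => ?_) (σ.injective.ne hpq.ne')
  rcases lt_trichotomy (σ p) q with hpq' | hpq' | hpq'
  · exact hsm.1 ⟨p, σ p, q, σ q, hp, hpq', hq, by rwa [hσ p], by rwa [hσ q], by rwa [hσ q]⟩
  · exact lt_asymm hpq (hq.trans_eq (hpq' ▸ hσ p))
  · exact hsm.2 ⟨p, q, σ p, σ q, hpq, hpq', hlt, by rwa [hσ, hσ], by rwa [hσ q], hlt⟩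

theorem skewMerged_involution_no_adjacent_3142 (n : ℕ) (σ : Equiv.Perm (Fin n))
    (hsm : SkewMerged σ) (hinv : σ⁻¹ = σ) :
    ¬ ∃ i j j' k : Fin n, (i : ℕ) < j ∧ (j' : ℕ) = (j : ℕ) + 1 ∧ (j' : ℕ) < k ∧
      σ j < σ k ∧ σ k < σ i ∧ σ i < σ j' := by
  rintro ⟨i, j, j', k, hij, hjj', hj'k, hab, hbc, hcd⟩
  have hσ : Function.Involutive σ := fun x => by
    simpa only [hinv] using Equiv.Perm.inv_eq_iff_eq.mpr (rfl : σ x = σ x)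
  have hanti := hsm.strictAntiOn_excedances hσ
  by_cases hexc : i < σ i ∧ j' < σ j'
  · exact lt_asymm hcd (hanti hexc.1 hexc.2 (Fin.lt_def.2 (by omega)))
  · have hj : σ j < σ (σ j) := by rw [hσ j]; omega
    have hk : σ k < σ (σ k) := by rw [hσ k]; omega
    refine lt_asymm ?_ (hanti hj hk hab)
    rw [hσ j, hσ k]
    exact Fin.lt_def.2 (by omega)
end

section
/- The number p_n of (2,4)-protected standard Young tableaux of size n (shape a hook with an extra box at position (2,2), where the entries 1, 2, 3 do not all lie in the first row or all in the first column) equals (n-3)·2^{n-3} for all n ≥ 4. -/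
/-- A standard Young tableau on a given finite set of cells: the entries on the
cells are a bijection onto `{1, ..., #cells}`, rows and columns are strictly
increasing, and the function vanishes off the cells. Cells are `(row, column)`
pairs, `0`-indexed. -/
def IsSYTOn (cells : Finset (ℕ × ℕ)) (T : ℕ × ℕ → ℕ) : Prop :=
  Set.BijOn T ↑cells ↑(Finset.Icc 1 cells.card) ∧
  (∀ p ∈ cells, ∀ q ∈ cells, p.1 = q.1 → p.2 < q.2 → T p < T q) ∧
  (∀ p ∈ cells, ∀ q ∈ cells, p.2 = q.2 → p.1 < q.1 → T p < T q) ∧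
  (∀ p, p ∉ cells → T p = 0)

/-- The cells of a hook with an additional box at position (2,2) (1-indexed):
first row of length `a`, second row of length 2, and `b` further rows of
length 1. -/
def hookPlusCells (a b : ℕ) : Finset (ℕ × ℕ) :=
  ((Finset.range a).image fun j => (0, j)) ∪ {(1, 0), (1, 1)} ∪
    ((Finset.range b).image fun i => (i + 2, 0))

/-!
In a protected tableau the entries `1, 2, 3` lie in the square, so `1` sits in the corner,
`2` and `3` occupy the cells `(0, 1)` and `(1, 0)` in one of two orders, and the box `(1, 1)`
holds some `c ∈ [4, n]`. Rows and columns increase, so the rest of the tableau is determined by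
the set `S` of entries in the first row beyond the square: past the square, the first row lists
`S` and the first column lists `[4, n] \ ({c} ∪ S)` in increasing order, and every
`S ⊆ [4, n] \ {c}` occurs. This gives `2 · (n - 3) · 2 ^ (n - 4)` tableaux.
-/

open Finset

namespace Nat

variable {S : Finset ℕ} {i j : ℕ}

lemma nth_mem_finset (h : j < #S) : nth (· ∈ S) j ∈ S :=
  nth_mem_of_lt_card (p := (· ∈ S)) S.finite_toSet (by simpa using h)

lemma nth_lt_nth_finset (hij : i < j) (hj : j < #S) : nth (· ∈ S) i < nth (· ∈ S) j :=
  nth_lt_nth_of_lt_card (p := (· ∈ S)) S.finite_toSet hij (by simpa using hj)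

lemma nth_finset_of_card_le (h : #S ≤ j) : nth (· ∈ S) j = 0 :=
  nth_of_card_le (p := (· ∈ S)) S.finite_toSet (by simpa using h)

lemma exists_lt_card_nth_finset_eq {x : ℕ} (hx : x ∈ S) : ∃ j < #S, nth (· ∈ S) j = x := by
  simpa using exists_lt_card_finite_nth_eq (p := (· ∈ S)) S.finite_toSet hx

lemma range_nth_finset : Set.range (nth (· ∈ S)) = insert 0 ↑S :=
  range_nth_of_finite (p := (· ∈ S)) S.finite_toSet

lemma eq_nth_finset {f : ℕ → ℕ} {m : ℕ} (hmono : StrictMonoOn f (Set.Iio m))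
    (himage : f '' Set.Iio m = S) (hzero : ∀ j, m ≤ j → f j = 0) : f = nth (· ∈ S) := by
  have hcard : #S = m := by
    rw [← Set.ncard_coe_finset, ← himage, hmono.injOn.ncard_image, Set.ncard_Iio_nat]
  have hdom : {j | ∀ hf : (Set.ofPred (· ∈ S)).Finite, j < #hf.toFinset} = Set.Iio m := by
    ext j
    simp [hcard]
  funext j
  rcases lt_or_ge j m with hj | hj
  · refine eq_nth_of_strictMonoOn_of_mapsTo_of_surjOn f ?_ ?_ ?_ ?_ <;> rw [hdom]
    · simpa [← himage] using Set.surjOn_image f (Set.Iio m)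
    · simpa [← himage] using Set.mapsTo_image f (Set.Iio m)
    · exact hmono
    · exact hj
  · rw [hzero j hj, nth_finset_of_card_le (hcard ▸ hj)]

end Nat

section HookPlusCells

variable {a b i j : ℕ}

lemma mem_hookPlusCells :
    (i, j) ∈ hookPlusCells a b ↔ i = 0 ∧ j < a ∨ i = 1 ∧ j ≤ 1 ∨ j = 0 ∧ 2 ≤ i ∧ i < b + 2 := by
  simp only [hookPlusCells, mem_union, mem_image, mem_range, mem_insert, mem_singleton,
    Prod.mk.injEq]
  constructor
  · rintro ((⟨k, hk, rfl, rfl⟩ | ⟨rfl, rfl⟩ | ⟨rfl, rfl⟩) | ⟨k, hk, rfl, rfl⟩) <;> omega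
  · rintro (⟨rfl, hj⟩ | ⟨rfl, hj⟩ | ⟨rfl, hi, hib⟩)
    · exact .inl (.inl ⟨j, hj, rfl, rfl⟩)
    · interval_cases j <;> simp
    · exact .inr ⟨i - 2, by omega, by omega, rfl⟩

lemma card_hookPlusCells (a b : ℕ) : #(hookPlusCells a b) = a + 2 + b := by
  rw [hookPlusCells, card_union_of_disjoint, card_union_of_disjoint,
    card_image_of_injective _ fun _ _ h => (Prod.mk.inj h).2,
    card_image_of_injective _ fun _ _ h => by simpa using (Prod.mk.inj h).1]
  · simp
  all_goals simp [disjoint_left]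

lemma isSYTOn_hookPlusCells_iff {T : ℕ × ℕ → ℕ} (ha : 2 ≤ a) :
    IsSYTOn (hookPlusCells a b) T ↔
      Set.BijOn T ↑(hookPlusCells a b) ↑(Icc 1 (a + 2 + b)) ∧
      StrictMonoOn (fun j => T (0, j)) (Set.Iio a) ∧
      StrictMonoOn (fun i => T (i, 0)) (Set.Iio (b + 2)) ∧
      T (0, 1) < T (1, 1) ∧ T (1, 0) < T (1, 1) ∧
      ∀ p ∉ hookPlusCells a b, T p = 0 := by
  rw [IsSYTOn, card_hookPlusCells]
  refine and_congr_right fun _ => ⟨?_, ?_⟩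
  · rintro ⟨hrow, hcol, hzero⟩
    have mem {i j : ℕ} : _ → (i, j) ∈ hookPlusCells a b := mem_hookPlusCells.2
    exact ⟨fun j (hj : j < a) k (hk : k < a) hjk =>
        hrow _ (mem (by omega)) _ (mem (by omega)) rfl hjk,
      fun i (hi : i < b + 2) k (hk : k < b + 2) hik =>
        hcol _ (mem (by omega)) _ (mem (by omega)) rfl hik,
      hcol (0, 1) (mem (by omega)) (1, 1) (mem (by omega)) rfl one_pos,
      hrow (1, 0) (mem (by omega)) (1, 1) (mem (by omega)) rfl one_pos, hzero⟩
  · rintro ⟨hrow, hcol, h01, h10, hzero⟩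
    refine ⟨?_, ?_, hzero⟩
    · rintro ⟨i, j⟩ hp ⟨i', j'⟩ hq (rfl : i = i') (hjj' : j < j')
      rw [mem_hookPlusCells] at hp hq
      obtain rfl | rfl | hi : i = 0 ∨ i = 1 ∨ 2 ≤ i := by omega
      · exact hrow (show j < a by omega) (show j' < a by omega) hjj'
      · obtain ⟨rfl, rfl⟩ : j = 0 ∧ j' = 1 := by omega
        exact h10
      · omega
    · rintro ⟨i, j⟩ hp ⟨i', j'⟩ hq (rfl : j = j') (hii' : i < i')
      rw [mem_hookPlusCells] at hp hq
      obtain rfl | rfl | hj : j = 0 ∨ j = 1 ∨ 2 ≤ j := by omega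
      · exact hcol (show i < b + 2 by omega) (show i' < b + 2 by omega) hii'
      · obtain ⟨rfl, rfl⟩ : i = 0 ∧ i' = 1 := by omega
        exact h01
      · omega

end HookPlusCells

def IsProtectedOn (cells : Finset (ℕ × ℕ)) (T : ℕ × ℕ → ℕ) : Prop :=
  ∀ p ∈ cells, T p ≤ 3 → p.1 ≤ 1 ∧ p.2 ≤ 1

lemma IsProtectedOn.four_le {cells : Finset (ℕ × ℕ)} {T : ℕ × ℕ → ℕ} (h : IsProtectedOn cells T)
    {p : ℕ × ℕ} (hp : p ∈ cells) (hsq : ¬(p.1 ≤ 1 ∧ p.2 ≤ 1)) : 4 ≤ T p :=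
  not_lt.1 fun h3 => hsq (h p hp (by omega))

def hookPlusColumn (n c : ℕ) (S : Finset ℕ) : Finset ℕ := (Icc 4 n).erase c \ S

/-- `Nat.nth (· ∈ S) j` is the `j`-th smallest element of `S` and `0` once `j ≥ #S`, so the
tableau vanishes off the shape `hookPlusCells (#S + 2) #(hookPlusColumn n c S)`. -/
noncomputable def hookPlusTableau (n : ℕ) (s : Bool) (c : ℕ) (S : Finset ℕ) : ℕ × ℕ → ℕ
  | (0, 0) => 1
  | (0, 1) => if s then 2 else 3
  | (1, 0) => if s then 3 else 2
  | (1, 1) => c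
  | (0, j + 2) => Nat.nth (· ∈ S) j
  | (i + 2, 0) => Nat.nth (· ∈ hookPlusColumn n c S) i
  | _ => 0

section Construction

variable {n c : ℕ} {s : Bool} {S : Finset ℕ}

lemma card_hookPlusColumn (hc : c ∈ Icc 4 n) (hS : S ⊆ (Icc 4 n).erase c) :
    #S + 2 + 2 + #(hookPlusColumn n c S) = n := by
  have hcard := card_le_card hS
  rw [card_erase_of_mem hc, Nat.card_Icc] at hcard
  rw [hookPlusColumn, card_sdiff_of_subset hS, card_erase_of_mem hc, Nat.card_Icc]
  have := mem_Icc.1 hc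
  omega

lemma hookPlusTableau_square :
    hookPlusTableau n s c S (0, 0) = 1 ∧
      2 ≤ hookPlusTableau n s c S (0, 1) ∧ hookPlusTableau n s c S (0, 1) ≤ 3 ∧
      2 ≤ hookPlusTableau n s c S (1, 0) ∧ hookPlusTableau n s c S (1, 0) ≤ 3 ∧
      hookPlusTableau n s c S (1, 1) = c := by
  cases s <;> simp [hookPlusTableau]

lemma hookPlusTableau_mem_Icc_four (hS : S ⊆ (Icc 4 n).erase c) {p : ℕ × ℕ}
    (hp : p ∈ hookPlusCells (#S + 2) #(hookPlusColumn n c S)) (hsq : ¬(p.1 ≤ 1 ∧ p.2 ≤ 1)) :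
    hookPlusTableau n s c S p ∈ Icc 4 n := by
  obtain ⟨i, j⟩ := p
  rw [mem_hookPlusCells] at hp
  obtain ⟨rfl, hj⟩ | ⟨rfl, hj⟩ | ⟨rfl, hi, hi'⟩ := hp
  · obtain ⟨j, rfl⟩ : ∃ k, j = k + 2 := ⟨j - 2, by omega⟩
    exact mem_of_mem_erase (hS (Nat.nth_mem_finset (by omega)))
  · omega
  · obtain ⟨i, rfl⟩ : ∃ k, i = k + 2 := ⟨i - 2, by omega⟩
    have hmem : Nat.nth (· ∈ hookPlusColumn n c S) i ∈ hookPlusColumn n c S :=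
      Nat.nth_mem_finset (by omega)
    exact mem_of_mem_erase (mem_sdiff.1 hmem).1

lemma isProtectedOn_hookPlusTableau (hS : S ⊆ (Icc 4 n).erase c) :
    IsProtectedOn (hookPlusCells (#S + 2) #(hookPlusColumn n c S)) (hookPlusTableau n s c S) :=
  fun p hp hp3 => by_contra fun hsq => by
    have := mem_Icc.1 (hookPlusTableau_mem_Icc_four (s := s) hS hp hsq)
    omega

lemma strictMonoOn_hookPlusTableau_row (hS : S ⊆ (Icc 4 n).erase c) :
    StrictMonoOn (fun j => hookPlusTableau n s c S (0, j)) (Set.Iio (#S + 2)) := by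
  have hsq := hookPlusTableau_square (n := n) (s := s) (c := c) (S := S)
  have h4 {j : ℕ} (hj : j < #S) : 4 ≤ hookPlusTableau n s c S (0, j + 2) :=
    (mem_Icc.1 (hookPlusTableau_mem_Icc_four hS (mem_hookPlusCells.2 (by omega)) (by omega))).1
  intro j (hj : j < #S + 2) k (hk : k < #S + 2) (hjk : j < k)
  rcases j with _ | _ | j <;> rcases k with _ | _ | k <;> try simp only [zero_add] at *
  all_goals first
    | exact lt_of_lt_of_le (by omega) (h4 (j := k) (by omega))
    | exact Nat.nth_lt_nth_finset (S := S) (by omega) (by omega)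
    | omega

lemma strictMonoOn_hookPlusTableau_column (hS : S ⊆ (Icc 4 n).erase c) :
    StrictMonoOn (fun i => hookPlusTableau n s c S (i, 0))
      (Set.Iio (#(hookPlusColumn n c S) + 2)) := by
  have hsq := hookPlusTableau_square (n := n) (s := s) (c := c) (S := S)
  have h4 {i : ℕ} (hi : i < #(hookPlusColumn n c S)) : 4 ≤ hookPlusTableau n s c S (i + 2, 0) :=
    (mem_Icc.1 (hookPlusTableau_mem_Icc_four hS (mem_hookPlusCells.2 (by omega)) (by omega))).1
  intro i (hi : i < _ + 2) k (hk : k < _ + 2) (hik : i < k)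
  rcases i with _ | _ | i <;> rcases k with _ | _ | k <;> try simp only [zero_add] at *
  all_goals first
    | exact lt_of_lt_of_le (by omega) (h4 (i := k) (by omega))
    | exact Nat.nth_lt_nth_finset (S := hookPlusColumn n c S) (by omega) (by omega)
    | omega

lemma mapsTo_hookPlusTableau (hc : c ∈ Icc 4 n) (hS : S ⊆ (Icc 4 n).erase c) :
    Set.MapsTo (hookPlusTableau n s c S) ↑(hookPlusCells (#S + 2) #(hookPlusColumn n c S))
      ↑(Icc 1 n) := by
  rintro ⟨i, j⟩ hp
  by_cases hij : i ≤ 1 ∧ j ≤ 1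
  · have hc4 := mem_Icc.1 hc
    have hsq := hookPlusTableau_square (n := n) (s := s) (c := c) (S := S)
    obtain ⟨hi, hj⟩ := hij
    interval_cases i <;> interval_cases j <;> simp only [mem_coe, mem_Icc] <;> omega
  · exact Icc_subset_Icc_left (by norm_num) (hookPlusTableau_mem_Icc_four hS hp hij)

lemma surjOn_hookPlusTableau :
    Set.SurjOn (hookPlusTableau n s c S) ↑(hookPlusCells (#S + 2) #(hookPlusColumn n c S))
      ↑(Icc 1 n) := by
  intro v hv
  rw [mem_coe, mem_Icc] at hv
  have mem {i j : ℕ} : _ → (i, j) ∈ hookPlusCells (#S + 2) #(hookPlusColumn n c S) :=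
    mem_hookPlusCells.2
  obtain rfl | rfl | rfl | hv4 : v = 1 ∨ v = 2 ∨ v = 3 ∨ 4 ≤ v := by omega
  · exact ⟨(0, 0), mem (by omega), rfl⟩
  · cases s
    exacts [⟨(1, 0), mem (by omega), rfl⟩, ⟨(0, 1), mem (by omega), rfl⟩]
  · cases s
    exacts [⟨(0, 1), mem (by omega), rfl⟩, ⟨(1, 0), mem (by omega), rfl⟩]
  by_cases hvc : v = c
  · exact ⟨(1, 1), mem (by omega), hvc.symm⟩
  by_cases hvS : v ∈ S
  · obtain ⟨j, hj, rfl⟩ := Nat.exists_lt_card_nth_finset_eq hvS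
    exact ⟨(0, j + 2), mem (by omega), rfl⟩
  · have hvR : v ∈ hookPlusColumn n c S :=
      mem_sdiff.2 ⟨mem_erase.2 ⟨hvc, mem_Icc.2 ⟨hv4, hv.2⟩⟩, hvS⟩
    obtain ⟨i, hi, rfl⟩ := Nat.exists_lt_card_nth_finset_eq hvR
    exact ⟨(i + 2, 0), mem (by omega), rfl⟩

lemma isSYTOn_hookPlusTableau (hc : c ∈ Icc 4 n) (hS : S ⊆ (Icc 4 n).erase c) :
    IsSYTOn (hookPlusCells (#S + 2) #(hookPlusColumn n c S)) (hookPlusTableau n s c S) := by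
  have hc4 := mem_Icc.1 hc
  have hsq := hookPlusTableau_square (n := n) (s := s) (c := c) (S := S)
  have hmaps := mapsTo_hookPlusTableau (s := s) hc hS
  have hsurj := surjOn_hookPlusTableau (n := n) (s := s) (c := c) (S := S)
  rw [isSYTOn_hookPlusCells_iff (by omega), card_hookPlusColumn hc hS]
  refine ⟨⟨hmaps, injOn_of_surjOn_of_card_le _ hmaps hsurj ?_, hsurj⟩,
    strictMonoOn_hookPlusTableau_row hS, strictMonoOn_hookPlusTableau_column hS,
    by omega, by omega, ?_⟩
  · rw [card_hookPlusCells, card_hookPlusColumn hc hS, Nat.card_Icc, Nat.add_sub_cancel]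
  · rintro ⟨i, j⟩ hp
    rw [mem_hookPlusCells] at hp
    rcases i with _ | _ | i <;> rcases j with _ | _ | j <;>
      try simp only [zero_add, true_and] at *
    all_goals first
      | omega
      | rfl
      | exact Nat.nth_finset_of_card_le (S := S) (j := j) (by omega)
      | exact Nat.nth_finset_of_card_le (S := hookPlusColumn n c S) (j := i) (by omega)

end Construction

section Analysis

variable {a b : ℕ} {T : ℕ × ℕ → ℕ}

lemma square_values_of_isProtectedOn (ha : 2 ≤ a) (hsyt : IsSYTOn (hookPlusCells a b) T)
    (hprot : IsProtectedOn (hookPlusCells a b) T) :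
    T (0, 0) = 1 ∧ (T (0, 1) = 2 ∧ T (1, 0) = 3 ∨ T (0, 1) = 3 ∧ T (1, 0) = 2) ∧
      4 ≤ T (1, 1) := by
  obtain ⟨hbij, hrow, hcol, h01, h10, -⟩ := (isSYTOn_hookPlusCells_iff ha).1 hsyt
  have mem {i j : ℕ} : _ → (i, j) ∈ hookPlusCells a b := mem_hookPlusCells.2
  have h00 : T (0, 0) < T (0, 1) := hrow (by simp; omega) (by simp; omega) one_pos
  have h00' : T (0, 0) < T (1, 0) := hcol (by simp) (by simp) one_pos
  have hpos : 1 ≤ T (0, 0) := (mem_Icc.1 (hbij.mapsTo (mem (by omega)))).1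
  have hne : T (0, 1) ≠ T (1, 0) := fun h => by
    simpa using hbij.injOn (mem (by omega)) (mem (by omega)) h
  -- each of `1, 2, 3` is attained, and only inside the square
  have hsmall (v : ℕ) (h1 : 1 ≤ v) (h3 : v ≤ 3) :
      T (0, 0) = v ∨ T (0, 1) = v ∨ T (1, 0) = v ∨ T (1, 1) = v := by
    obtain ⟨⟨i, j⟩, hp, rfl⟩ := hbij.surjOn (by simp; omega : v ∈ (Icc 1 (a + 2 + b) : Set ℕ))
    obtain ⟨hi, hj⟩ := hprot _ hp h3
    interval_cases i <;> interval_cases j <;> simp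
  have := hsmall 1 le_rfl (by norm_num)
  have := hsmall 2 (by norm_num) (by norm_num)
  have := hsmall 3 (by norm_num) le_rfl
  omega

lemma image_row_subset (ha : 2 ≤ a) (hsyt : IsSYTOn (hookPlusCells a b) T)
    (hprot : IsProtectedOn (hookPlusCells a b) T) :
    (range (a - 2)).image (fun j => T (0, j + 2)) ⊆ (Icc 4 (a + 2 + b)).erase (T (1, 1)) := by
  obtain ⟨hbij, -⟩ := (isSYTOn_hookPlusCells_iff ha).1 hsyt
  have mem {i j : ℕ} : _ → (i, j) ∈ hookPlusCells a b := mem_hookPlusCells.2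
  simp only [subset_iff, mem_image, mem_range]
  rintro _ ⟨j, hj, rfl⟩
  refine mem_erase.2 ⟨fun h => ?_, mem_Icc.2 ⟨hprot.four_le (mem (by omega)) (by simp),
    (mem_Icc.1 (hbij.mapsTo (mem (by omega)))).2⟩⟩
  simpa using hbij.injOn (mem (by omega)) (mem (by omega)) h

lemma image_column_eq_hookPlusColumn (ha : 2 ≤ a) (hsyt : IsSYTOn (hookPlusCells a b) T)
    (hprot : IsProtectedOn (hookPlusCells a b) T) :
    (fun i => T (i + 2, 0)) '' Set.Iio b =
      ↑(hookPlusColumn (a + 2 + b) (T (1, 1)) ((range (a - 2)).image fun j => T (0, j + 2))) := by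
  obtain ⟨h00, h0110, -⟩ := square_values_of_isProtectedOn ha hsyt hprot
  obtain ⟨hbij, -⟩ := (isSYTOn_hookPlusCells_iff ha).1 hsyt
  have mem {i j : ℕ} : _ → (i, j) ∈ hookPlusCells a b := mem_hookPlusCells.2
  have hne {p q : ℕ × ℕ} (hp : p ∈ hookPlusCells a b) (hq : q ∈ hookPlusCells a b)
      (hpq : p ≠ q) : T p ≠ T q :=
    fun h => hpq (hbij.injOn hp hq h)
  ext x
  simp only [Set.mem_image, Set.mem_Iio, mem_coe, hookPlusColumn, mem_sdiff, mem_erase,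
    mem_Icc, mem_image, mem_range, not_exists, not_and]
  constructor
  · rintro ⟨i, hi, rfl⟩
    exact ⟨⟨hne (mem (by omega)) (mem (by omega)) (by simp),
      hprot.four_le (mem (by omega)) (by simp), (mem_Icc.1 (hbij.mapsTo (mem (by omega)))).2⟩,
      fun j hj => hne (mem (by omega)) (mem (by omega)) (by simp)⟩
  · rintro ⟨⟨hxc, hx4, hxn⟩, hxS⟩
    obtain ⟨⟨i, j⟩, hp, rfl⟩ := hbij.surjOn (by simp; omega : x ∈ (Icc 1 (a + 2 + b) : Set ℕ))
    by_cases hsq : i ≤ 1 ∧ j ≤ 1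
    · obtain ⟨hi, hj⟩ := hsq
      interval_cases i <;> interval_cases j <;> omega
    rw [mem_coe, mem_hookPlusCells] at hp
    obtain ⟨rfl, hj⟩ | hp | ⟨rfl, hi, hib⟩ := hp
    · exact absurd (by rw [Nat.sub_add_cancel (by omega : 2 ≤ j)]) (hxS (j - 2) (by omega))
    · omega
    · exact ⟨i - 2, by omega, by rw [Nat.sub_add_cancel (by omega : 2 ≤ i)]⟩

lemma exists_eq_hookPlusTableau (ha : 2 ≤ a) (hsyt : IsSYTOn (hookPlusCells a b) T)
    (hprot : IsProtectedOn (hookPlusCells a b) T) :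
    ∃ s c S, c ∈ Icc 4 (a + 2 + b) ∧ S ⊆ (Icc 4 (a + 2 + b)).erase c ∧
      hookPlusTableau (a + 2 + b) s c S = T := by
  obtain ⟨h00, h0110, h11⟩ := square_values_of_isProtectedOn ha hsyt hprot
  obtain ⟨hbij, hrow, hcol, -, -, hzero⟩ := (isSYTOn_hookPlusCells_iff ha).1 hsyt
  set S := (range (a - 2)).image fun j => T (0, j + 2)
  have hrowS : (fun j => T (0, j + 2)) = Nat.nth (· ∈ S) := by
    refine Nat.eq_nth_finset (m := a - 2) (fun j (hj : j < a - 2) k (hk : k < a - 2) hjk =>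
      hrow (by simp; omega) (by simp; omega) (by omega)) (by simp [S]) fun j hj => hzero _ ?_
    rw [mem_hookPlusCells]
    omega
  have hcolR : (fun i => T (i + 2, 0)) = Nat.nth (· ∈ hookPlusColumn (a + 2 + b) (T (1, 1)) S) := by
    refine Nat.eq_nth_finset (fun i (hi : i < b) k (hk : k < b) hik =>
      hcol (by simp; omega) (by simp; omega) (by omega))
      (image_column_eq_hookPlusColumn ha hsyt hprot) fun i hi => hzero _ ?_
    rw [mem_hookPlusCells]
    omega
  refine ⟨decide (T (0, 1) = 2), T (1, 1), S,
    mem_Icc.2 ⟨h11, (mem_Icc.1 (hbij.mapsTo (mem_hookPlusCells.2 (by omega)))).2⟩,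
    image_row_subset ha hsyt hprot, ?_⟩
  funext ⟨i, j⟩
  rcases i with _ | _ | i <;> rcases j with _ | _ | j
  · exact h00.symm
  · rcases h0110 with ⟨h01, -⟩ | ⟨h01, -⟩ <;> simp [hookPlusTableau, h01]
  · exact (congrFun hrowS j).symm
  · rcases h0110 with ⟨h01, h10⟩ | ⟨h01, h10⟩ <;> simp [hookPlusTableau, h01, h10]
  · rfl
  all_goals first
    | exact (congrFun hcolR i).symm
    | exact (hzero _ (by rw [mem_hookPlusCells]; omega)).symm

end Analysis

def protectedData (n : ℕ) : Finset (Bool × (_ : ℕ) × Finset ℕ) :=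
  univ ×ˢ (Icc 4 n).sigma fun c => ((Icc 4 n).erase c).powerset

lemma mem_protectedData {n c : ℕ} {s : Bool} {S : Finset ℕ} :
    (s, ⟨c, S⟩) ∈ protectedData n ↔ c ∈ Icc 4 n ∧ S ⊆ (Icc 4 n).erase c := by
  simp [protectedData]

lemma card_protectedData (n : ℕ) : #(protectedData n) = (n - 3) * 2 ^ (n - 3) := by
  rw [protectedData, card_product, card_univ, Fintype.card_bool, card_sigma,
    sum_congr rfl fun c hc => by rw [card_powerset, card_erase_of_mem hc], sum_const,
    Nat.card_Icc, smul_eq_mul]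
  rcases Nat.lt_or_ge n 4 with hn | hn
  · interval_cases n <;> rfl
  · obtain ⟨m, rfl⟩ := Nat.exists_eq_add_of_le hn
    rw [show 4 + m + 1 - 4 - 1 = m by omega, show 4 + m + 1 - 4 = m + 1 by omega,
      show 4 + m - 3 = m + 1 by omega, pow_succ]
    ring

lemma hookPlusTableau_injOn (n : ℕ) :
    Set.InjOn (fun d : Bool × (_ : ℕ) × Finset ℕ => hookPlusTableau n d.1 d.2.1 d.2.2)
      ↑(protectedData n) := by
  rintro ⟨s, c, S⟩ hd ⟨s', c', S'⟩ hd' h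
  obtain ⟨-, hS⟩ := mem_protectedData.1 hd
  obtain ⟨-, hS'⟩ := mem_protectedData.1 hd'
  have hs : s = s' := by
    have h01 : (if s then 2 else 3 : ℕ) = if s' then 2 else 3 := congrFun h (0, 1)
    cases s <;> cases s' <;> simp_all
  have hc : c = c' := congrFun h (1, 1)
  subst hs hc
  have hrange : Set.range (Nat.nth (· ∈ S)) \ {0} = Set.range (Nat.nth (· ∈ S')) \ {0} :=
    congrArg (Set.range · \ {0}) (funext fun j => congrFun h (0, j + 2))
  have h0 {S : Finset ℕ} (hS : S ⊆ (Icc 4 n).erase c) : 0 ∉ (S : Set ℕ) := fun h0 => by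
    simpa using mem_of_mem_erase (hS h0)
  rw [Nat.range_nth_finset, Nat.range_nth_finset, Set.insert_sdiff_self_of_notMem (h0 hS),
    Set.insert_sdiff_self_of_notMem (h0 hS'), coe_inj] at hrange
  rw [hrange]

lemma exists_isSYTOn_isProtectedOn_iff {n : ℕ} {T : ℕ × ℕ → ℕ} :
    (∃ a b : ℕ, 2 ≤ a ∧ a + 2 + b = n ∧
      IsSYTOn (hookPlusCells a b) T ∧ IsProtectedOn (hookPlusCells a b) T) ↔
      T ∈ (fun d : Bool × (_ : ℕ) × Finset ℕ => hookPlusTableau n d.1 d.2.1 d.2.2) ''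
        ↑(protectedData n) := by
  constructor
  · rintro ⟨a, b, ha, rfl, hsyt, hprot⟩
    obtain ⟨s, c, S, hc, hS, rfl⟩ := exists_eq_hookPlusTableau ha hsyt hprot
    exact ⟨(s, ⟨c, S⟩), mem_protectedData.2 ⟨hc, hS⟩, rfl⟩
  · rintro ⟨⟨s, c, S⟩, hd, rfl⟩
    obtain ⟨hc, hS⟩ := mem_protectedData.1 hd
    exact ⟨#S + 2, _, by omega, card_hookPlusColumn hc hS, isSYTOn_hookPlusTableau hc hS,
      isProtectedOn_hookPlusTableau hS⟩

theorem protected_count_general (n : ℕ) :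
    Nat.card {T : ℕ × ℕ → ℕ // ∃ a b : ℕ, 2 ≤ a ∧ a + 2 + b = n ∧
        IsSYTOn (hookPlusCells a b) T ∧
        ∀ p ∈ hookPlusCells a b, T p ≤ 3 → p.1 ≤ 1 ∧ p.2 ≤ 1} =
      (n - 3) * 2 ^ (n - 3) := by
  refine (Nat.card_congr
    (Equiv.subtypeEquivRight fun _ => exists_isSYTOn_isProtectedOn_iff)).trans ?_
  rw [Nat.card_coe_set_eq, (hookPlusTableau_injOn n).ncard_image, Set.ncard_coe_finset,
    card_protectedData]

theorem protected_count (n : ℕ) (hn : 4 ≤ n) :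
    Nat.card {T : ℕ × ℕ → ℕ // ∃ a b : ℕ, 2 ≤ a ∧ a + 2 + b = n ∧
        IsSYTOn (hookPlusCells a b) T ∧
        ∀ p ∈ hookPlusCells a b, T p ≤ 3 → p.1 ≤ 1 ∧ p.2 ≤ 1} =
      (n - 3) * 2 ^ (n - 3) :=
  protected_count_general n
end

section
/- For every fixed n, the sequence a_{n,k} = C(n,k)·(2k−n+1)/(k+1), for ⌈n/2⌉ ≤ k ≤ n, is log-concave: a_{n,k-1} · a_{n,k+1} ≤ a_{n,k}^2 for all k with ⌈n/2⌉ < k < n. -/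
/-- The ballot number `a_{n,k} = C(n,k)·(2k−n+1)/(k+1)`, the number of
standard Young tableaux of shape `(k, n−k)`. -/
def ballotQ (n k : ℕ) : ℚ :=
  (n.choose k : ℚ) * (2 * (k : ℚ) - (n : ℚ) + 1) / ((k : ℚ) + 1)

/-!
Since `C(n,k)/(k+1) = C(n+1,k+1)/(n+1)`, the ballot number `a_{n,k}` is, up to the constant
factor `1/(n+1)`, the product of the binomial coefficient `C(n+1,k+1)` and the linear term
`2k−n+1`. Both are log-concave in `k`, and the linear term is positive in the range considered,
so their product is log-concave.
-/

theorem Nat.choose_mul_choose_add_two_le_sq (m j : ℕ) :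
    m.choose j * m.choose (j + 2) ≤ m.choose (j + 1) ^ 2 := by
  rcases Nat.lt_or_ge j m with hjm | hmj
  · have h₀ : m.choose (j + 1) * (j + 1) = m.choose j * (m - j) := Nat.choose_succ_right_eq m j
    have h₁ : m.choose (j + 2) * (j + 2) = m.choose (j + 1) * (m - (j + 1)) :=
      Nat.choose_succ_right_eq m (j + 1)
    have hweights : (j + 1) * (m - (j + 1)) ≤ (j + 2) * (m - j) :=
      Nat.mul_le_mul (by omega) (by omega)
    have hpos : 0 < (j + 2) * (m - j) := Nat.mul_pos (by omega) (by omega)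
    refine Nat.le_of_mul_le_mul_right ?_ hpos
    calc m.choose j * m.choose (j + 2) * ((j + 2) * (m - j))
        = (m.choose (j + 2) * (j + 2)) * (m.choose j * (m - j)) := by ring
      _ = m.choose (j + 1) ^ 2 * ((j + 1) * (m - (j + 1))) := by rw [h₁, ← h₀]; ring
      _ ≤ m.choose (j + 1) ^ 2 * ((j + 2) * (m - j)) := Nat.mul_le_mul_left _ hweights
  · simp [Nat.choose_eq_zero_of_lt (by omega : m < j + 2)]

theorem mul_mul_mul_le_sq_of_le_sq {R : Type*}
    [CommRing R] [LinearOrder R] [IsStrictOrderedRing R] {a b c x y z : R} (habc : a * c ≤ b ^ 2) (hxyz : x * z ≤ y ^ 2) (hxz : 0 ≤ x * z) :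
    (a * x) * (c * z) ≤ (b * y) ^ 2 :=
  calc (a * x) * (c * z) = (a * c) * (x * z) := by ring
    _ ≤ b ^ 2 * y ^ 2 := mul_le_mul habc hxyz hxz (sq_nonneg b)
    _ = (b * y) ^ 2 := (mul_pow b y 2).symm

theorem ballotQ_eq_choose_succ_mul_div (n k : ℕ) :
    ballotQ n k = ((n + 1).choose (k + 1) : ℚ) * (2 * k - n + 1) / (n + 1) := by
  have h : ((n + 1 : ℕ) : ℚ) * n.choose k = (n + 1).choose (k + 1) * ((k + 1 : ℕ) : ℚ) := by
    exact_mod_cast Nat.add_one_mul_choose_eq n k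
  push_cast at h
  unfold ballotQ
  field_simp
  linear_combination (2 * (k : ℚ) - n + 1) * h

theorem ballot_log_concave (n : ℕ) :
    ∀ k : ℕ, (n + 1) / 2 < k → k < n →
      ballotQ n (k - 1) * ballotQ n (k + 1) ≤ ballotQ n k ^ 2 := by
  intro k hk _
  obtain ⟨j, rfl⟩ : ∃ j, k = j + 1 := ⟨k - 1, by omega⟩
  have hn : (n : ℚ) ≤ 2 * j := by exact_mod_cast (by omega : n ≤ 2 * j)
  have hbinom :
      ((n + 1).choose (j + 1) : ℚ) * (n + 1).choose (j + 3) ≤ (n + 1).choose (j + 2) ^ 2 := by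
    exact_mod_cast Nat.choose_mul_choose_add_two_le_sq (n + 1) (j + 1)
  have hlinear : (2 * (j : ℚ) - n + 1) * (2 * (j + 2) - n + 1) ≤ (2 * (j + 1) - n + 1) ^ 2 := by
    nlinarith
  have hpos : (0 : ℚ) ≤ (2 * j - n + 1) * (2 * (j + 2) - n + 1) :=
    mul_nonneg (by linarith) (by linarith)
  simp only [Nat.add_sub_cancel, ballotQ_eq_choose_succ_mul_div, div_mul_div_comm, div_pow, ← sq]
  push_cast
  gcongr
  simpa only [add_assoc, one_add_one_eq_two, Nat.reduceAdd] using
    mul_mul_mul_le_sq_of_le_sq hbinom hlinear hpos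
end

section
/- Let L(n,k) be the set of lattice paths from (0,0) to (k, n−k) using steps (1,0) and (0,1) that never go above the diagonal x = y, where n−k ≤ k ≤ n−2. Then there exists an injection from L(n,k) × L(n,k+2) into L(n,k+1) × L(n,k+1); in particular |L(n,k)| · |L(n,k+2)| ≤ |L(n,k+1)|^2. -/
/-- A lattice path from `(0,0)` to `(k, n−k)`, encoded as a list of `n` steps
(`true` = East step `(1,0)`, `false` = North step `(0,1)`) with `k` East steps,
that never goes above the diagonal `x = y`: every prefix has at least as many
East steps as North steps. -/
def IsLPath (n k : ℕ) (p : List Bool) : Prop :=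
  p.length = n ∧ p.count true = k ∧
  ∀ m : ℕ, (p.take m).count false ≤ (p.take m).count true

/-!
Compare a path `p` with `k` East steps and a path `q` with `k + 2` through the gap
`gap p q m` between their numbers of East steps among the first `m` steps: it starts at `0`,
ends at `2` and rises by at most one per step. Exchanging the tails of `p` and `q` after the
last time `c` at which the gap is `1` gives two paths with `k + 1` East steps; the one ending
like `q` stays below the diagonal because the gap exceeds `1` after `c`. The exchange turns the
gap `g` after `c` into `2 - g`, so `c` is still the last time the gap is `1`, and exchanging
again recovers `(p, q)`.
-/

namespace LatticePath

open List

section Lists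

variable {α : Type*}

lemma count_take_succ_le [BEq α] (l : List α) (a : α) (m : ℕ) :
    (l.take (m + 1)).count a ≤ (l.take m).count a + 1 := by
  rw [take_add_one, count_append]
  have : (l[m]?.toList).count a ≤ 1 := count_le_length.trans (by cases l[m]? <;> simp)
  omega

lemma count_take_mono [BEq α] (l : List α) (a : α) : Monotone fun m => (l.take m).count a :=
  fun _ _ h => (take_sublist_take_left h).count_le a

def swapTails (c : ℕ) (x : List α × List α) : List α × List α :=
  (x.1.take c ++ x.2.drop c, x.2.take c ++ x.1.drop c)

lemma swapTails_swapTails {c : ℕ} {x : List α × List α} (h₁ : c ≤ x.1.length)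
    (h₂ : c ≤ x.2.length) : swapTails c (swapTails c x) = x := by
  have e₁ : (x.1.take c).length = c := by simpa using h₁
  have e₂ : (x.2.take c).length = c := by simpa using h₂
  simp [swapTails, take_left' e₁, take_left' e₂, drop_left' e₁, drop_left' e₂]

lemma take_take_append_drop_of_le {l₁ l₂ : List α} {c m : ℕ} (hm : m ≤ c)
    (hc : c ≤ l₁.length) : (l₁.take c ++ l₂.drop c).take m = l₁.take m := by
  rw [take_append_of_le_length (by simp; omega), take_take, min_eq_left hm]

lemma count_take_append_drop_add [BEq α] {l₁ l₂ : List α} {c m : ℕ} (hm : c ≤ m)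
    (hc : c ≤ l₁.length) (a : α) :
    ((l₁.take c ++ l₂.drop c).take m).count a + (l₂.take c).count a =
      (l₁.take c).count a + (l₂.take m).count a := by
  obtain ⟨j, rfl⟩ := Nat.exists_eq_add_of_le hm
  rw [take_append, take_take, length_take, min_eq_left hc, min_eq_right (by omega),
    Nat.add_sub_cancel_left, take_add, count_append, count_append]
  omega

end Lists

lemma exists_eq_of_succ_le_add_one {g : ℕ → ℤ} (hg : ∀ i, g (i + 1) ≤ g i + 1) {c : ℤ} :
    ∀ {N : ℕ}, g 0 ≤ c → c ≤ g N → ∃ m ≤ N, g m = c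
  | 0, h₀, hN => ⟨0, le_rfl, le_antisymm h₀ hN⟩
  | N + 1, h₀, hN => by
    by_cases hc : c ≤ g N
    · obtain ⟨m, hm, hgm⟩ := exists_eq_of_succ_le_add_one hg h₀ hc
      exact ⟨m, by omega, hgm⟩
    · exact ⟨N + 1, le_rfl, by have := hg N; omega⟩

def gap (p q : List Bool) (m : ℕ) : ℤ :=
  (q.take m).count true - (p.take m).count true

lemma gap_succ_le (p q : List Bool) (m : ℕ) : gap p q (m + 1) ≤ gap p q m + 1 := by
  have hq := count_take_succ_le q true m
  have hp := count_take_mono p true (Nat.le_add_right m 1)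
  simp only [gap] at *
  omega

lemma gap_swapTails_eq_one_iff {p q : List Bool} {c : ℕ} (hc : gap p q c = 1)
    (hp : c ≤ p.length) (hq : c ≤ q.length) (m : ℕ) :
    gap (swapTails c (p, q)).1 (swapTails c (p, q)).2 m = 1 ↔ gap p q m = 1 := by
  rcases le_total m c with hmc | hcm
  · simp only [swapTails, gap, take_take_append_drop_of_le hmc hp,
      take_take_append_drop_of_le hmc hq]
  · have hs := count_take_append_drop_add (l₂ := q) hcm hp true
    have hr := count_take_append_drop_add (l₂ := p) hcm hq true
    simp only [swapTails, gap] at *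
    omega

/-- `gap p q m = 1` says that after `m` steps `q` is at the point that `p` reaches, translated
by `(1, -1)`. -/
def lastCrossing (p q : List Bool) : ℕ :=
  Nat.findGreatest (fun m => gap p q m = 1) p.length

def flipPair (x : List Bool × List Bool) : List Bool × List Bool :=
  swapTails (lastCrossing x.1 x.2) x

lemma lastCrossing_flipPair {p q : List Bool} (hlen : p.length = q.length)
    (hc : gap p q (lastCrossing p q) = 1) :
    lastCrossing (flipPair (p, q)).1 (flipPair (p, q)).2 = lastCrossing p q := by
  have hcp : lastCrossing p q ≤ p.length := Nat.findGreatest_le _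
  have hlen' : (flipPair (p, q)).1.length = p.length := by
    simp only [flipPair, swapTails, length_append, length_take, length_drop]
    omega
  unfold lastCrossing at *
  rw [hlen']
  congr 1
  funext m
  exact propext (gap_swapTails_eq_one_iff hc hcp (hlen ▸ hcp) m)

lemma flipPair_flipPair {p q : List Bool} (hlen : p.length = q.length)
    (hc : gap p q (lastCrossing p q) = 1) : flipPair (flipPair (p, q)) = (p, q) := by
  have hcp : lastCrossing p q ≤ p.length := Nat.findGreatest_le _
  conv_lhs => rw [flipPair, lastCrossing_flipPair hlen hc]
  exact swapTails_swapTails hcp (hlen ▸ hcp)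

lemma isLPath_iff_length_take_le {n k : ℕ} {p : List Bool} :
    IsLPath n k p ↔
      p.length = n ∧ p.count true = k ∧ ∀ m, (p.take m).length ≤ 2 * (p.take m).count true := by
  refine and_congr_right fun _ => and_congr_right fun _ => forall_congr' fun m => ?_
  have := count_true_add_count_false (p.take m)
  omega

section Paths

variable {n k : ℕ} {p q : List Bool}

lemma gap_eq_two (hp : IsLPath n k p) (hq : IsLPath n (k + 2) q) {m : ℕ} (hm : n ≤ m) :
    gap p q m = 2 := by
  simp [gap, take_of_length_le (hp.1 ▸ hm), take_of_length_le (hq.1 ▸ hm), hp.2.1, hq.2.1]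

lemma gap_lastCrossing (hp : IsLPath n k p) (hq : IsLPath n (k + 2) q) :
    gap p q (lastCrossing p q) = 1 := by
  obtain ⟨m, hm, hgm⟩ := exists_eq_of_succ_le_add_one (gap_succ_le p q) (c := 1) (N := n)
    (by simp [gap]) (by rw [gap_eq_two hp hq le_rfl]; norm_num)
  exact Nat.findGreatest_spec (P := fun m => gap p q m = 1) (hp.1 ▸ hm) hgm

lemma one_lt_gap_of_lastCrossing_lt (hp : IsLPath n k p) (hq : IsLPath n (k + 2) q) {m : ℕ}
    (hm : lastCrossing p q < m) : 1 < gap p q m := by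
  by_contra! hle
  rcases le_total n m with hnm | hmn
  · rw [gap_eq_two hp hq hnm] at hle
    norm_num at hle
  obtain ⟨i, hi, hgi⟩ := exists_eq_of_succ_le_add_one (g := fun i => gap p q (m + i))
    (fun i => gap_succ_le p q (m + i)) (N := n - m) hle
    (by simp only [Nat.add_sub_cancel' hmn, gap_eq_two hp hq le_rfl]; norm_num)
  exact Nat.findGreatest_is_greatest (lt_of_lt_of_le hm (Nat.le_add_right m i))
    (by rw [hp.1]; omega) hgi

lemma isLPath_flipPair_fst (hp : IsLPath n k p) (hq : IsLPath n (k + 2) q) :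
    IsLPath n (k + 1) (flipPair (p, q)).1 := by
  have hc := gap_lastCrossing hp hq
  have hafter := fun m => one_lt_gap_of_lastCrossing_lt hp hq (m := m)
  simp only [flipPair, swapTails]
  rw [isLPath_iff_length_take_le] at hp hq ⊢
  obtain ⟨hpl, hpk, hpd⟩ := hp
  obtain ⟨hql, hqk, -⟩ := hq
  have hcp : lastCrossing p q ≤ p.length := Nat.findGreatest_le _
  have hlen : (p.take (lastCrossing p q) ++ q.drop (lastCrossing p q)).length = n := by
    simp only [length_append, length_take, length_drop]
    omega
  have hcount := fun m (hcm : lastCrossing p q ≤ m) =>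
    count_take_append_drop_add (l₂ := q) hcm hcp true
  refine ⟨hlen, ?_, fun m => ?_⟩
  · have h := hcount n (hpl ▸ hcp)
    rw [take_of_length_le hlen.le, take_of_length_le hql.le] at h
    simp only [gap] at hc
    omega
  · rcases le_or_gt m (lastCrossing p q) with hmc | hcm
    · simpa [take_take_append_drop_of_le hmc hcp] using hpd m
    · have h := hcount m hcm.le
      have hgap := hafter m hcm
      have hpm := hpd m
      simp only [length_take, gap, hlen, hpl] at *
      omega

lemma isLPath_flipPair_snd (hp : IsLPath n k p) (hq : IsLPath n (k + 2) q) :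
    IsLPath n (k + 1) (flipPair (p, q)).2 := by
  have hc := gap_lastCrossing hp hq
  simp only [flipPair, swapTails]
  rw [isLPath_iff_length_take_le] at hp hq ⊢
  obtain ⟨hpl, hpk, hpd⟩ := hp
  obtain ⟨hql, hqk, hqd⟩ := hq
  have hcq : lastCrossing p q ≤ q.length := hql ▸ hpl ▸ Nat.findGreatest_le _
  have hlen : (q.take (lastCrossing p q) ++ p.drop (lastCrossing p q)).length = n := by
    simp only [length_append, length_take, length_drop]
    omega
  have hcount := fun m (hcm : lastCrossing p q ≤ m) =>
    count_take_append_drop_add (l₂ := p) hcm hcq true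
  refine ⟨hlen, ?_, fun m => ?_⟩
  · have h := hcount n (hql ▸ hcq)
    rw [take_of_length_le hlen.le, take_of_length_le hpl.le] at h
    simp only [gap] at hc
    omega
  · rcases le_total m (lastCrossing p q) with hmc | hcm
    · simpa [take_take_append_drop_of_le hmc hcq] using hqd m
    · have h := hcount m hcm
      have hpm := hpd m
      simp only [length_take, gap, hlen, hpl] at *
      omega

end Paths

instance (n k : ℕ) : Finite {p : List Bool // IsLPath n k p} :=
  ((List.finite_length_eq Bool n).subset fun _ hp => hp.1).to_subtype

def flipPaths (n k : ℕ) :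
    {p // IsLPath n k p} × {q // IsLPath n (k + 2) q} →
      {p // IsLPath n (k + 1) p} × {q // IsLPath n (k + 1) q} :=
  fun x => (⟨_, isLPath_flipPair_fst x.1.2 x.2.2⟩, ⟨_, isLPath_flipPair_snd x.1.2 x.2.2⟩)

lemma flipPaths_injective (n k : ℕ) : Function.Injective (flipPaths n k) := by
  rintro ⟨⟨p, hp⟩, ⟨q, hq⟩⟩ ⟨⟨p', hp'⟩, ⟨q', hq'⟩⟩ h
  have hflip : flipPair (p, q) = flipPair (p', q') := by
    simpa [flipPaths, Prod.ext_iff] using h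
  have hpq := flipPair_flipPair (hp.1.trans hq.1.symm) (gap_lastCrossing hp hq)
  have hpq' := flipPair_flipPair (hp'.1.trans hq'.1.symm) (gap_lastCrossing hp' hq')
  rw [hflip, hpq', Prod.mk.injEq] at hpq
  obtain ⟨rfl, rfl⟩ := hpq
  rfl

end LatticePath

theorem lattice_path_injection_general (n k : ℕ) :
    (∃ f : {p : List Bool // IsLPath n k p} × {p : List Bool // IsLPath n (k + 2) p} →
        {p : List Bool // IsLPath n (k + 1) p} × {p : List Bool // IsLPath n (k + 1) p},
      Function.Injective f) ∧
    Nat.card {p : List Bool // IsLPath n k p} *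
        Nat.card {p : List Bool // IsLPath n (k + 2) p} ≤
      Nat.card {p : List Bool // IsLPath n (k + 1) p} ^ 2 := by
  refine ⟨⟨LatticePath.flipPaths n k, LatticePath.flipPaths_injective n k⟩, ?_⟩
  rw [sq, ← Nat.card_prod, ← Nat.card_prod]
  exact Nat.card_le_card_of_injective _ (LatticePath.flipPaths_injective n k)

theorem lattice_path_injection (n k : ℕ) (h1 : n - k ≤ k) (h2 : k ≤ n - 2) :
    (∃ f : {p : List Bool // IsLPath n k p} × {p : List Bool // IsLPath n (k + 2) p} →
        {p : List Bool // IsLPath n (k + 1) p} × {p : List Bool // IsLPath n (k + 1) p},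
      Function.Injective f) ∧
    Nat.card {p : List Bool // IsLPath n k p} *
        Nat.card {p : List Bool // IsLPath n (k + 2) p} ≤
      Nat.card {p : List Bool // IsLPath n (k + 1) p} ^ 2 :=
  lattice_path_injection_general n k
end

section
/- For all n ≥ 2 and all k with n/2 ≤ k ≤ n−1, the squared ballot numbers satisfy (C(n,k−1)·(2k−n−1)/k)^2 · (C(n,k+1)·(2k−n+3)/(k+2))^2 ≤ (C(n,k)·(2k−n+1)/(k+1))^4. -/
/-- Key exact-division identity: the ballot number as a difference of binomials. -/
lemma ballot_key (n j : ℕ) (h : n ≤ 2*j+1) (hjn : j ≤ n) :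
    (n.choose j - n.choose (j+1)) * (j+1) = n.choose j * (2*j+1-n) := by
  have h1 : n.choose (j+1) * (j+1) = n.choose j * (n - j) := Nat.choose_succ_right_eq n j
  rw [Nat.sub_mul, h1, ← Nat.mul_sub, show j+1-(n-j) = 2*j+1-n from by omega]

/-- The purely polynomial core inequality, over ℤ. -/
lemma core_ineq (P Q R c0 c c1 k e d : ℤ)
    (hk : 1 ≤ k) (he : 1 ≤ e) (hd : 0 ≤ d) (_hc : 0 ≤ c)
    (hP : P * k = c0 * d) (hQ : Q * (k+1) = c * (d+2)) (hR : R * (k+2) = c1 * (d+4))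
    (hI1 : c0 * (e+1) = c * k) (hI2 : c1 * (k+1) = c * e) :
    P * R * (k*(k+2)*(k+1)^2*(e+1)) ≤ Q^2 * (k*(k+2)*(k+1)^2*(e+1)) := by
  have hL : P * R * (k*(k+2)*(k+1)^2*(e+1)) = c^2 * (k*e*(k+1)*d*(d+4)) := by
    linear_combination (R*(k+2)*(k+1)^2*(e+1)) * hP + (c0*d*(k+1)^2*(e+1)) * hR
      + (c1*d*(d+4)*(k+1)^2) * hI1 + (c*k*d*(d+4)*(k+1)) * hI2
  have hRr : Q^2 * (k*(k+2)*(k+1)^2*(e+1)) = c^2 * ((d+2)^2*k*(k+2)*(e+1)) := by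
    linear_combination ((Q*(k+1) + c*(d+2))*k*(k+2)*(e+1)) * hQ
  rw [hL, hRr]
  have h5 : e*(k+1) ≤ (e+1)*(k+2) := by nlinarith
  have h6 : d*(d+4) ≤ (d+2)^2 := by nlinarith
  have hcc : 0 ≤ c^2 := sq_nonneg c
  have hpoly : k*e*(k+1)*d*(d+4) ≤ (d+2)^2*k*(k+2)*(e+1) := by
    calc k*e*(k+1)*d*(d+4) = k*((e*(k+1))*(d*(d+4))) := by ring
      _ ≤ k*(((e+1)*(k+2))*((d+2)^2)) := by
          apply mul_le_mul_of_nonneg_left _ (by linarith)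
          exact mul_le_mul h5 h6 (by positivity) (by positivity)
      _ = (d+2)^2*k*(k+2)*(e+1) := by ring
  exact mul_le_mul_of_nonneg_left hpoly hcc

theorem squared_ballot_log_concave (n k : ℕ) (hn : 2 ≤ n)
    (h1 : n / 2 ≤ k) (h2 : k ≤ n - 1) :
    (n.choose (k - 1) * (2 * k - n - 1) / k) ^ 2 *
        (n.choose (k + 1) * (2 * k - n + 3) / (k + 2)) ^ 2 ≤
      (n.choose k * (2 * k - n + 1) / (k + 1)) ^ 4 := by
  have hkn : 2*k + 1 ≥ n := by omega
  have hk1 : 1 ≤ k := by omega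
  by_cases hcase : 2*k ≤ n + 1
  · have hz : 2 * k - n - 1 = 0 := by omega
    simp [hz]
  · -- main case : 2*k ≥ n+2
    set d : ℕ := 2*k - n - 1 with hd
    have hd1 : 1 ≤ d := by omega
    set e : ℕ := n - k with he
    have he1 : 1 ≤ e := by omega
    set P : ℕ := n.choose (k-1) - n.choose k with hPdef
    set Q : ℕ := n.choose k - n.choose (k+1) with hQdef
    set R : ℕ := n.choose (k+1) - n.choose (k+2) with hRdef
    -- the three exact product identities
    have hP : P * k = n.choose (k-1) * d := by
      have := ballot_key n (k-1) (by omega) (by omega)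
      rw [show k - 1 + 1 = k from by omega] at this
      rw [hPdef, this]
      congr 1
      omega
    have hQ : Q * (k+1) = n.choose k * (d+2) := by
      have := ballot_key n k (by omega) (by omega)
      rw [hQdef, this]
      congr 1
      omega
    have hR : R * (k+2) = n.choose (k+1) * (d+4) := by
      have := ballot_key n (k+1) (by omega) (by omega)
      rw [hRdef, this]
      congr 1
      omega
    -- rewrite the divisions
    have eA : n.choose (k-1) * (2*k - n - 1) / k = P := by
      rw [← hd, ← hP, Nat.mul_div_cancel _ (by omega)]
    have eB : n.choose k * (2*k - n + 1) / (k+1) = Q := by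
      rw [show 2*k - n + 1 = d + 2 from by omega, ← hQ,
        Nat.mul_div_cancel _ (by omega)]
    have eC : n.choose (k+1) * (2*k - n + 3) / (k+2) = R := by
      rw [show 2*k - n + 3 = d + 4 from by omega, ← hR,
        Nat.mul_div_cancel _ (by omega)]
    rw [eA, eB, eC]
    -- binomial ratio identities
    have hI1 : n.choose (k-1) * (e+1) = n.choose k * k := by
      have := Nat.choose_succ_right_eq n (k-1)
      rw [show k - 1 + 1 = k from by omega, show n - (k-1) = e + 1 from by omega] at this
      omega
    have hI2 : n.choose (k+1) * (k+1) = n.choose k * e := by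
      have := Nat.choose_succ_right_eq n k
      rw [show n - k = e from rfl] at this
      exact this
    -- reduce to P * R ≤ Q ^ 2
    have key2 : P * R ≤ Q ^ 2 := by
      have hM : (0:ℕ) < k*(k+2)*(k+1)^2*(e+1) := by positivity
      have hmul : P * R * (k*(k+2)*(k+1)^2*(e+1)) ≤ Q^2 * (k*(k+2)*(k+1)^2*(e+1)) := by
        have hZ := core_ineq (P:ℤ) (Q:ℤ) (R:ℤ) (n.choose (k-1) : ℤ) (n.choose k : ℤ)
          (n.choose (k+1) : ℤ) (k:ℤ) (e:ℤ) (d:ℤ)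
          (by exact_mod_cast hk1) (by exact_mod_cast he1) (by positivity)
          (by positivity)
          (by exact_mod_cast hP) (by exact_mod_cast hQ) (by exact_mod_cast hR)
          (by exact_mod_cast hI1) (by exact_mod_cast hI2)
        exact_mod_cast hZ
      exact Nat.le_of_mul_le_mul_right hmul hM
    calc P ^ 2 * R ^ 2 = (P * R) ^ 2 := by ring
      _ ≤ (Q ^ 2) ^ 2 := Nat.pow_le_pow_left key2 2
      _ = Q ^ 4 := by ring
end
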